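/- arXiv:1812.08065 — 3 statements merged into one kernel-verified Lean document; each statement's English description precedes it below -/
import Mathlib

section
/- Let N be a cherry-picking network, let S be a minimal CPS reducing N with S_i = (x,y) reducing a cherry at step i, and let z, w be distinct leaves sharing the same parent as x and y at that step. If S' is the sequence S_{[i+1:]} with every occurrence of z replaced by x, then S_{[:i-1]}(z,w)S' is also a minimal CPS for N. -/
open scoped Classical

/-- A (representation of a) rooted phylogenetic network: vertices are natural
numbers, `E` is the edge set, `root` the root, `taxa` the set of taxa labelling
the leaves via `label`. -/
structure Network (X : Type) where
  V : Finset ℕ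
  E : Finset (ℕ × ℕ)
  root : ℕ
  taxa : Finset X
  label : X → ℕ

namespace Network

variable {X : Type}

noncomputable def indeg (N : Network X) (v : ℕ) : ℕ :=
  (N.E.filter (fun e => e.2 = v)).card

noncomputable def outdeg (N : Network X) (v : ℕ) : ℕ :=
  (N.E.filter (fun e => e.1 = v)).card

noncomputable def parents (N : Network X) (v : ℕ) : Finset ℕ :=
  (N.E.filter (fun e => e.2 = v)).image Prod.fst

noncomputable def children (N : Network X) (v : ℕ) : Finset ℕ :=
  (N.E.filter (fun e => e.1 = v)).image Prod.snd

/-- The parent of a vertex (meaningful when the vertex has a unique parent,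
e.g. for leaves). -/
noncomputable def theParent (N : Network X) (v : ℕ) : ℕ :=
  WithTop.untopD 0 (N.parents v).min

def IsLeafNode (N : Network X) (v : ℕ) : Prop := N.indeg v = 1 ∧ N.outdeg v = 0

def IsTreeNode (N : Network X) (v : ℕ) : Prop := N.indeg v = 1 ∧ 2 ≤ N.outdeg v

def IsRetic (N : Network X) (v : ℕ) : Prop := 2 ≤ N.indeg v ∧ N.outdeg v = 1

/-- Well-formedness: a phylogenetic network has a single outdegree-1, indegree-0
root, leaves bijectively labelled by the taxa, all other nodes tree nodes or
reticulations, and it is acyclic. -/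
def IsPhylo (N : Network X) : Prop :=
  N.root ∈ N.V ∧ N.indeg N.root = 0 ∧ N.outdeg N.root = 1 ∧
  (∀ e ∈ N.E, e.1 ∈ N.V ∧ e.2 ∈ N.V) ∧
  Set.InjOn N.label ↑N.taxa ∧
  (∀ x ∈ N.taxa, N.label x ∈ N.V ∧ N.IsLeafNode (N.label x)) ∧
  (∀ v ∈ N.V, N.IsLeafNode v → ∃ x ∈ N.taxa, N.label x = v) ∧
  (∀ v ∈ N.V, v = N.root ∨ N.IsLeafNode v ∨ N.IsTreeNode v ∨ N.IsRetic v) ∧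
  (∀ v : ℕ, ¬ Relation.TransGen (fun a b => (a, b) ∈ N.E) v v)

def SemiBinary (N : Network X) : Prop := ∀ v ∈ N.V, N.IsTreeNode v → N.outdeg v = 2

def IsBinary (N : Network X) : Prop :=
  N.SemiBinary ∧ ∀ v ∈ N.V, N.IsRetic v → N.indeg v = 2

def StackFree (N : Network X) : Prop :=
  ∀ e ∈ N.E, ¬ (N.IsRetic e.1 ∧ N.IsRetic e.2)

def IsTreeChild (N : Network X) : Prop :=
  N.StackFree ∧
  ∀ v ∈ N.V, N.IsTreeNode v → ∃ c ∈ N.children v, N.IsTreeNode c ∨ N.IsLeafNode c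

def IsTree (N : Network X) : Prop := ∀ v ∈ N.V, ¬ N.IsRetic v

/-- Number of reticulation edges minus number of reticulations. -/
noncomputable def reticulationNumber (N : Network X) : ℕ :=
  (N.E.filter (fun e => N.IsRetic e.2)).card - (N.V.filter (fun v => N.IsRetic v)).card

/-- `(x, y)` is a cherry: two distinct leaves sharing a parent. -/
def IsCherry (N : Network X) (x y : X) : Prop :=
  x ∈ N.taxa ∧ y ∈ N.taxa ∧ x ≠ y ∧
  ∃ p : ℕ, (p, N.label x) ∈ N.E ∧ (p, N.label y) ∈ N.E

/-- `(x, y)` is a reticulated cherry: the parent of `x` is a reticulation, the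
parent of `y` a tree node which is also a parent of the parent of `x`. -/
def IsRetCherry (N : Network X) (x y : X) : Prop :=
  x ∈ N.taxa ∧ y ∈ N.taxa ∧ x ≠ y ∧
  ∃ px py : ℕ, (px, N.label x) ∈ N.E ∧ (py, N.label y) ∈ N.E ∧
    N.IsRetic px ∧ N.IsTreeNode py ∧ (py, px) ∈ N.E

def ReduciblePair (N : Network X) (x y : X) : Prop :=
  N.IsCherry x y ∨ N.IsRetCherry x y

noncomputable def delVert (N : Network X) (v : ℕ) : Network X :=
  { V := N.V.erase v,
    E := N.E.filter (fun e => e.1 ≠ v ∧ e.2 ≠ v),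
    root := N.root, taxa := N.taxa, label := N.label }

noncomputable def delEdge (N : Network X) (e : ℕ × ℕ) : Network X :=
  { N with E := N.E.erase e }

/-- Suppress a degree-2 (indegree-1, outdegree-1) vertex. -/
noncomputable def suppress (N : Network X) (v : ℕ) : Network X :=
  if N.indeg v = 1 ∧ N.outdeg v = 1 then
    { V := N.V.erase v,
      E := (N.E.filter (fun e => e.1 ≠ v ∧ e.2 ≠ v)) ∪ (N.parents v ×ˢ N.children v),
      root := N.root, taxa := N.taxa, label := N.label }
  else N

/-- Reduce an ordered pair `(x, y)`: in the cherry case delete the leaf `x` and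
suppress its parent; in the reticulated-cherry case delete the reticulation edge
between the two parents and suppress the resulting degree-2 vertices; otherwise
do nothing. -/
noncomputable def reducePair (N : Network X) (c : X × X) : Network X :=
  if N.IsCherry c.1 c.2 then
    suppress
      { V := N.V.erase (N.label c.1),
        E := N.E.filter (fun e => e.1 ≠ N.label c.1 ∧ e.2 ≠ N.label c.1),
        root := N.root, taxa := N.taxa.erase c.1, label := N.label }
      (N.theParent (N.label c.1))
  else if N.IsRetCherry c.1 c.2 then
    (((N.delEdge (N.theParent (N.label c.2), N.theParent (N.label c.1))).suppress
        (N.theParent (N.label c.2))).suppress (N.theParent (N.label c.1)))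
  else N

/-- Successive reduction of a network by a sequence of ordered pairs. -/
noncomputable def reduceSeq (N : Network X) (S : List (X × X)) : Network X :=
  S.foldl (fun M c => M.reducePair c) N

/-- A network consisting of a single leaf, its root, and the edge between them. -/
def IsSingleLeaf (N : Network X) : Prop :=
  ∃ x ∈ N.taxa, N.V = {N.root, N.label x} ∧ N.E = {(N.root, N.label x)} ∧
    N.root ≠ N.label x

/-- `S` reduces `N` to a single-leaf network. -/
def Reduces (S : List (X × X)) (N : Network X) : Prop :=
  (N.reduceSeq S).IsSingleLeaf

/-- A cherry-picking sequence: ordered pairs of distinct taxa such that each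
second coordinate reappears later as a first coordinate, or is the second
coordinate of the last pair. -/
def IsCPS (S : List (X × X)) : Prop :=
  (∀ p ∈ S, p.1 ≠ p.2) ∧
  ∀ (i : ℕ) (hi : i < S.length),
    ((S.get ⟨i, hi⟩).2 ∈ (S.drop (i + 1)).map Prod.fst) ∨
    (∃ q, S.getLast? = some q ∧ (S.get ⟨i, hi⟩).2 = q.2)

/-- A tree-child sequence: a CPS in which a leaf appearing as a first coordinate
never appears later as a second coordinate. -/
def IsTCS (S : List (X × X)) : Prop :=
  IsCPS S ∧
  ∀ (i j : ℕ) (hi : i < S.length) (hj : j < S.length),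
    i < j → (S.get ⟨i, hi⟩).1 ≠ (S.get ⟨j, hj⟩).2

def IsPartialCPS (S : List (X × X)) : Prop := ∃ T, IsCPS (S ++ T)

def IsPartialTCS (S : List (X × X)) : Prop := ∃ T, IsTCS (S ++ T)

/-- A minimal CPS for `N`: a CPS reducing `N` in which every pair changes the
network. -/
def IsMinimalCPS (S : List (X × X)) (N : Network X) : Prop :=
  IsCPS S ∧ Reduces S N ∧
  ∀ i < S.length, N.reduceSeq (S.take (i + 1)) ≠ N.reduceSeq (S.take i)

def IsMinimalTCS (S : List (X × X)) (N : Network X) : Prop :=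
  IsTCS S ∧ Reduces S N ∧
  ∀ i < S.length, N.reduceSeq (S.take (i + 1)) ≠ N.reduceSeq (S.take i)

/-- A cherry-picking network: a phylogenetic network reducible by some CPS. -/
def IsCPN (N : Network X) : Prop :=
  N.IsPhylo ∧ ∃ S, IsCPS S ∧ Reduces S N

/-- A directed path in `N`, given as its list of vertices. -/
def IsDipath (N : Network X) (l : List ℕ) : Prop :=
  l.Chain' (fun a b => (a, b) ∈ N.E)

def pathEdges (l : List ℕ) : List (ℕ × ℕ) := l.zip l.tail

/-- An embedding of `N'` into `N`: an injective node map and a map of edges to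
edge-disjoint directed paths, respecting the node map and the leaf labels. -/
def IsEmbedding (N' N : Network X) (f : ℕ → ℕ) (g : ℕ × ℕ → List ℕ) : Prop :=
  (∀ v ∈ N'.V, f v ∈ N.V) ∧
  Set.InjOn f ↑N'.V ∧
  (∀ x ∈ N'.taxa, f (N'.label x) = N.label x) ∧
  (∀ e ∈ N'.E, N.IsDipath (g e) ∧ (g e).head? = some (f e.1) ∧
    (g e).getLast? = some (f e.2)) ∧
  (∀ e ∈ N'.E, ∀ e' ∈ N'.E, e ≠ e' →
    ∀ p ∈ pathEdges (g e), p ∉ pathEdges (g e'))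

/-- `N'` is a subnetwork of `N` if `N'` embeds into `N`. -/
def IsSubnetwork (N' N : Network X) : Prop :=
  ∃ f g, IsEmbedding N' N f g

/-- Contract the edge `(u, v)`, identifying `v` with `u`. -/
noncomputable def contractEdge (N : Network X) (u v : ℕ) : Network X :=
  { V := N.V.erase v,
    E := (N.E.erase (u, v)).image
      (fun e => ((if e.1 = v then u else e.1), (if e.2 = v then u else e.2))),
    root := if N.root = v then u else N.root,
    taxa := N.taxa,
    label := fun x => if N.label x = v then u else N.label x }

def ContractStep (N M : Network X) : Prop :=
  ∃ u v : ℕ, (u, v) ∈ N.E ∧ M = N.contractEdge u v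

/-- `N` is a refinement of `M` if `M` can be obtained from `N` by contracting
some edges. -/
def IsRefinement (N M : Network X) : Prop :=
  Relation.ReflTransGen ContractStep N M

/-- `N` contains `M` if some refinement of `M` is a subnetwork of `N`. -/
def Contains (N M : Network X) : Prop :=
  ∃ M' : Network X, IsRefinement M' M ∧ IsSubnetwork M' N

/-- Isomorphism of labelled networks. -/
def Isomorphic (N N' : Network X) : Prop :=
  N.taxa = N'.taxa ∧
  ∃ f : ℕ → ℕ, Set.BijOn f ↑N.V ↑N'.V ∧
    (∀ u ∈ N.V, ∀ v ∈ N.V, ((u, v) ∈ N.E ↔ (f u, f v) ∈ N'.E)) ∧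
    f N.root = N'.root ∧
    (∀ x ∈ N.taxa, f (N.label x) = N'.label x)

end Network

open Network

/-!
Since `x` and `z` are leaves with a common parent in `M`, exchanging them (together with their
vertices) is an automorphism of `M`. It carries the reduction of the cherry `(x, y)` to that of
`(z, w)`, and then every later step of `S` to the same step with `x` and `z` exchanged; this
transport preserves both ending in a single leaf and every step changing the network. Because `x`
has been picked at step `i`, minimality keeps it out of the rest of `S`, so on the tail the
exchange is just the substitution of `x` for `z`. Finally, a sequence in which every pair changes
the network and which ends in a single leaf is automatically a cherry-picking sequence.
-/

theorem Finset.map_swap_of_mem {α : Type*} [DecidableEq α] {s : Finset α} {a b : α}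
    (ha : a ∈ s) (hb : b ∈ s) : s.map (Equiv.swap a b).toEmbedding = s :=
  Finset.map_perm fun t ht => by
    rcases (Equiv.swap_apply_ne_self_iff.1 ht).2 with rfl | rfl <;> assumption

namespace Network

variable {X : Type}

@[ext]
theorem ext {A B : Network X} (hV : A.V = B.V) (hE : A.E = B.E) (hroot : A.root = B.root)
    (htaxa : A.taxa = B.taxa) (hlabel : A.label = B.label) : A = B := by
  cases A; cases B; simp_all

section Basic

variable {A : Network X}

theorem mem_parents {u v : ℕ} : u ∈ A.parents v ↔ (u, v) ∈ A.E := by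
  simp [parents]

theorem mem_children {u v : ℕ} : u ∈ A.children v ↔ (v, u) ∈ A.E := by
  simp [children]

theorem eq_of_indeg_le_one {v a b : ℕ} (h : A.indeg v ≤ 1) (ha : (a, v) ∈ A.E)
    (hb : (b, v) ∈ A.E) : a = b := by
  simpa using Finset.card_le_one.1 h (a, v) (by simp [ha]) (b, v) (by simp [hb])

theorem notMem_E_of_outdeg_eq_zero {v : ℕ} (h : A.outdeg v = 0) (b : ℕ) : (v, b) ∉ A.E :=
  fun hb => by
    simp only [outdeg, Finset.card_eq_zero, Finset.filter_eq_empty_iff] at h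
    exact h hb rfl

theorem exists_mem_E_of_outdeg_eq_one {v : ℕ} (h : A.outdeg v = 1) : ∃ c, (v, c) ∈ A.E := by
  obtain ⟨e, he⟩ := Finset.card_pos.1 (h.symm ▸ Nat.one_pos : 0 < A.outdeg v)
  rw [Finset.mem_filter] at he
  exact ⟨e.2, he.2 ▸ he.1⟩

theorem theParent_eq {v q : ℕ} (hq : (q, v) ∈ A.E) (h : ∀ a, (a, v) ∈ A.E → a = q) :
    A.theParent v = q := by
  have : A.parents v = {q} := by
    ext a
    rw [mem_parents, Finset.mem_singleton]
    exact ⟨h a, fun ha => ha ▸ hq⟩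
  rw [theParent, this, Finset.min_singleton]
  rfl

@[simp]
theorem reduceSeq_nil : A.reduceSeq [] = A := rfl

@[simp]
theorem reduceSeq_cons (c : X × X) (T : List (X × X)) :
    A.reduceSeq (c :: T) = (A.reducePair c).reduceSeq T := rfl

theorem reduceSeq_append (T₁ T₂ : List (X × X)) :
    A.reduceSeq (T₁ ++ T₂) = (A.reduceSeq T₁).reduceSeq T₂ :=
  List.foldl_append ..

end Basic

noncomputable def deleteLeaf (A : Network X) (t : X) : Network X :=
  { A.delVert (A.label t) with taxa := A.taxa.erase t }

section Reduction

variable {A : Network X} {c : X × X}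

theorem reducePair_of_isCherry (h : A.IsCherry c.1 c.2) :
    A.reducePair c = (A.deleteLeaf c.1).suppress (A.theParent (A.label c.1)) := by
  rw [reducePair, if_pos h]
  rfl

theorem reducePair_of_isRetCherry (h₁ : ¬ A.IsCherry c.1 c.2) (h₂ : A.IsRetCherry c.1 c.2) :
    A.reducePair c =
      ((A.delEdge (A.theParent (A.label c.2), A.theParent (A.label c.1))).suppress
        (A.theParent (A.label c.2))).suppress (A.theParent (A.label c.1)) := by
  rw [reducePair, if_neg h₁, if_pos h₂]

theorem reducePair_of_not_reduciblePair (h : ¬ A.ReduciblePair c.1 c.2) :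
    A.reducePair c = A := by
  rw [ReduciblePair, not_or] at h
  rw [reducePair, if_neg h.1, if_neg h.2]

theorem reduciblePair_of_reducePair_ne (h : A.reducePair c ≠ A) : A.ReduciblePair c.1 c.2 :=
  not_not.1 (mt reducePair_of_not_reduciblePair h)

theorem ReduciblePair.mem_taxa {a b : X} (h : A.ReduciblePair a b) :
    a ∈ A.taxa ∧ b ∈ A.taxa ∧ a ≠ b := by
  rcases h with ⟨ha, hb, hab, -⟩ | ⟨ha, hb, hab, -⟩ <;> exact ⟨ha, hb, hab⟩

@[simp]
theorem suppress_taxa (v : ℕ) : (A.suppress v).taxa = A.taxa := by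
  unfold suppress; split_ifs <;> rfl

@[simp]
theorem suppress_label (v : ℕ) : (A.suppress v).label = A.label := by
  unfold suppress; split_ifs <;> rfl

theorem reducePair_taxa :
    (A.reducePair c).taxa = if A.IsCherry c.1 c.2 then A.taxa.erase c.1 else A.taxa := by
  unfold reducePair; split_ifs <;> simp [delEdge]

theorem reducePair_label : (A.reducePair c).label = A.label := by
  unfold reducePair; split_ifs <;> simp [delEdge]

theorem reducePair_taxa_subset : (A.reducePair c).taxa ⊆ A.taxa := by
  rw [reducePair_taxa]; split_ifs
  exacts [Finset.erase_subset _ _, subset_rfl]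

theorem mem_taxa_reducePair {t : X} (ht : t ∈ A.taxa) (hne : t ≠ c.1) :
    t ∈ (A.reducePair c).taxa := by
  rw [reducePair_taxa]; split_ifs
  exacts [Finset.mem_erase.2 ⟨hne, ht⟩, ht]

theorem snd_mem_taxa_reducePair (h : A.reducePair c ≠ A) : c.2 ∈ (A.reducePair c).taxa :=
  have ⟨_, h₂, hne⟩ := (reduciblePair_of_reducePair_ne h).mem_taxa
  mem_taxa_reducePair h₂ hne.symm

theorem reducePair_ne_of_isCherry {c : X × X} (h : A.IsCherry c.1 c.2) : A.reducePair c ≠ A :=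
  fun he => by
    have htaxa := congrArg taxa he
    rw [reducePair_taxa, if_pos h] at htaxa
    have hc := h.1
    rw [← htaxa] at hc
    exact Finset.notMem_erase c.1 A.taxa hc

theorem reducePair_eq_of_isCherry {a b c : X} (hb : A.IsCherry a b) (hc : A.IsCherry a c) :
    A.reducePair (a, b) = A.reducePair (a, c) := by
  rw [reducePair_of_isCherry (c := (a, b)) hb, reducePair_of_isCherry (c := (a, c)) hc]

theorem reduceSeq_taxa_subset (T : List (X × X)) : (A.reduceSeq T).taxa ⊆ A.taxa := by
  induction T generalizing A with
  | nil => exact subset_rfl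
  | cons c T ih => exact ih.trans reducePair_taxa_subset

theorem mem_taxa_reduceSeq {T : List (X × X)} {t : X} (ht : t ∈ A.taxa)
    (h : t ∉ T.map Prod.fst) : t ∈ (A.reduceSeq T).taxa := by
  induction T generalizing A with
  | nil => exact ht
  | cons c T ih =>
    rw [List.map_cons, List.mem_cons, not_or] at h
    exact ih (mem_taxa_reducePair ht h.1) h.2

end Reduction

structure IsLeafLabelled (A : Network X) : Prop where
  injOn : Set.InjOn A.label A.taxa
  label_mem : ∀ t ∈ A.taxa, A.label t ∈ A.V
  label_ne_root : ∀ t ∈ A.taxa, A.label t ≠ A.root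
  parent_unique : ∀ t ∈ A.taxa, ∀ a b, (a, A.label t) ∈ A.E → (b, A.label t) ∈ A.E → a = b
  notMem_E : ∀ t ∈ A.taxa, ∀ b, (A.label t, b) ∉ A.E

theorem IsPhylo.isLeafLabelled {A : Network X} (h : A.IsPhylo) : A.IsLeafLabelled := by
  obtain ⟨-, hroot, -, -, hinj, hleaf, -⟩ := h
  refine ⟨hinj, fun t ht => (hleaf t ht).1, fun t ht hr => ?_,
    fun t ht a b => eq_of_indeg_le_one (hleaf t ht).2.1.le,
    fun t ht => notMem_E_of_outdeg_eq_zero (hleaf t ht).2.2⟩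
  have := (hleaf t ht).2.1
  rw [hr, hroot] at this
  exact zero_ne_one this

namespace IsLeafLabelled

variable {A : Network X}

theorem theParent_label (h : A.IsLeafLabelled) {t : X} (ht : t ∈ A.taxa) {q : ℕ}
    (hq : (q, A.label t) ∈ A.E) : A.theParent (A.label t) = q :=
  theParent_eq hq fun a ha => h.parent_unique t ht a q ha hq

theorem suppress (h : A.IsLeafLabelled) (v : ℕ) : (A.suppress v).IsLeafLabelled := by
  unfold Network.suppress
  split_ifs with hv
  swap
  · exact h
  obtain ⟨c, hc⟩ := exists_mem_E_of_outdeg_eq_one hv.2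
  have hne : ∀ t ∈ A.taxa, A.label t ≠ v := fun t ht htv => h.notMem_E t ht c (htv ▸ hc)
  refine ⟨h.injOn, fun t ht => Finset.mem_erase.2 ⟨hne t ht, h.label_mem t ht⟩,
    h.label_ne_root, fun t ht a b ha hb => ?_, fun t ht b hb => ?_⟩
  · simp only [Finset.mem_union, Finset.mem_filter, Finset.mem_product, mem_parents,
      mem_children] at ha hb
    rcases ha with ⟨ha, ha', -⟩ | ⟨ha, ha'⟩ <;> rcases hb with ⟨hb, hb', -⟩ | ⟨hb, hb'⟩
    · exact h.parent_unique t ht a b ha hb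
    · exact absurd (h.parent_unique t ht a v ha hb') ha'
    · exact absurd (h.parent_unique t ht b v hb ha') hb'
    · exact eq_of_indeg_le_one hv.1.le ha hb
  · simp only [Finset.mem_union, Finset.mem_filter, Finset.mem_product, mem_parents,
      mem_children] at hb
    rcases hb with ⟨hb, -⟩ | ⟨hb, -⟩
    · exact h.notMem_E t ht b hb
    · exact h.notMem_E t ht v hb

theorem delEdge (h : A.IsLeafLabelled) (e : ℕ × ℕ) : (A.delEdge e).IsLeafLabelled :=
  ⟨h.injOn, h.label_mem, h.label_ne_root,
    fun t ht a b ha hb => h.parent_unique t ht a b (Finset.mem_of_mem_erase ha)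
      (Finset.mem_of_mem_erase hb),
    fun t ht b hb => h.notMem_E t ht b (Finset.mem_of_mem_erase hb)⟩

theorem deleteLeaf (h : A.IsLeafLabelled) {x : X} (hx : x ∈ A.taxa) :
    (A.deleteLeaf x).IsLeafLabelled := by
  have hsub : ∀ {t}, t ∈ (A.deleteLeaf x).taxa → t ∈ A.taxa := Finset.mem_of_mem_erase
  refine ⟨h.injOn.mono fun t => hsub, fun t ht => ?_, fun t ht => h.label_ne_root t (hsub ht),
    fun t ht a b ha hb => h.parent_unique t (hsub ht) a b (Finset.mem_of_mem_filter _ ha)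
      (Finset.mem_of_mem_filter _ hb),
    fun t ht b hb => h.notMem_E t (hsub ht) b (Finset.mem_of_mem_filter _ hb)⟩
  obtain ⟨htx, ht⟩ := Finset.mem_erase.1 ht
  exact Finset.mem_erase.2 ⟨fun he => htx (h.injOn ht hx he), h.label_mem t ht⟩

theorem reducePair (h : A.IsLeafLabelled) (c : X × X) : (A.reducePair c).IsLeafLabelled := by
  by_cases h₁ : A.IsCherry c.1 c.2
  · rw [reducePair_of_isCherry h₁]
    exact (h.deleteLeaf h₁.1).suppress _
  by_cases h₂ : A.IsRetCherry c.1 c.2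
  · rw [reducePair_of_isRetCherry h₁ h₂]
    exact ((h.delEdge _).suppress _).suppress _
  rw [reducePair_of_not_reduciblePair (not_or.2 ⟨h₁, h₂⟩)]
  exact h

theorem reduceSeq (h : A.IsLeafLabelled) (T : List (X × X)) :
    (A.reduceSeq T).IsLeafLabelled := by
  induction T generalizing A with
  | nil => exact h
  | cons c T ih => exact ih (h.reducePair c)

end IsLeafLabelled

theorem IsSingleLeaf.eq_of_mem_taxa {A : Network X} (hA : A.IsLeafLabelled) (h : A.IsSingleLeaf)
    {s t : X} (hs : s ∈ A.taxa) (ht : t ∈ A.taxa) : s = t := by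
  obtain ⟨x₀, hx₀, hV, -⟩ := h
  have key : ∀ u ∈ A.taxa, u = x₀ := fun u hu => by
    have hmem := hA.label_mem u hu
    rw [hV, Finset.mem_insert, Finset.mem_singleton] at hmem
    exact hmem.resolve_left (hA.label_ne_root u hu) |> hA.injOn hu hx₀
  rw [key s hs, key t ht]

def IsMinimalSeq : Network X → List (X × X) → Prop
  | _, [] => True
  | A, c :: T => A.reducePair c ≠ A ∧ (A.reducePair c).IsMinimalSeq T

section IsMinimalSeq

variable {A : Network X}

@[simp]
theorem isMinimalSeq_nil : A.IsMinimalSeq [] := trivial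

@[simp]
theorem isMinimalSeq_cons {c : X × X} {T : List (X × X)} :
    A.IsMinimalSeq (c :: T) ↔ A.reducePair c ≠ A ∧ (A.reducePair c).IsMinimalSeq T :=
  Iff.rfl

theorem isMinimalSeq_iff_forall_take {T : List (X × X)} :
    A.IsMinimalSeq T ↔
      ∀ i < T.length, A.reduceSeq (T.take (i + 1)) ≠ A.reduceSeq (T.take i) := by
  induction T generalizing A with
  | nil => simp
  | cons c T ih =>
    rw [isMinimalSeq_cons, ih, List.length_cons, Nat.forall_lt_succ_left]
    simp

theorem isMinimalSeq_append {T₁ T₂ : List (X × X)} :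
    A.IsMinimalSeq (T₁ ++ T₂) ↔ A.IsMinimalSeq T₁ ∧ (A.reduceSeq T₁).IsMinimalSeq T₂ := by
  induction T₁ generalizing A with
  | nil => simp
  | cons c T ih => simp [ih, and_assoc]

theorem IsMinimalSeq.mem_taxa {T : List (X × X)} (h : A.IsMinimalSeq T) {c : X × X}
    (hc : c ∈ T) : c.1 ∈ A.taxa ∧ c.2 ∈ A.taxa ∧ c.1 ≠ c.2 := by
  obtain ⟨T₁, T₂, rfl⟩ := List.append_of_mem hc
  rw [isMinimalSeq_append, isMinimalSeq_cons] at h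
  obtain ⟨h₁, h₂, hne⟩ := (reduciblePair_of_reducePair_ne h.2.1).mem_taxa
  exact ⟨reduceSeq_taxa_subset T₁ h₁, reduceSeq_taxa_subset T₁ h₂, hne⟩

theorem IsMinimalSeq.snd_mem {c : X × X} {T : List (X × X)}
    (h : A.IsMinimalSeq (c :: T)) :
    c.2 ∈ T.map Prod.fst ∨ c.2 ∈ (A.reduceSeq (c :: T)).taxa :=
  or_iff_not_imp_left.2 (mem_taxa_reduceSeq (snd_mem_taxa_reducePair h.1))

theorem IsMinimalSeq.getLast?_snd_mem {T : List (X × X)} (h : A.IsMinimalSeq T) {q : X × X}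
    (hq : T.getLast? = some q) : q.2 ∈ (A.reduceSeq T).taxa := by
  obtain ⟨T', rfl⟩ := List.getLast?_eq_some_iff.1 hq
  rw [isMinimalSeq_append, isMinimalSeq_cons] at h
  rw [reduceSeq_append, reduceSeq_cons, reduceSeq_nil]
  exact snd_mem_taxa_reducePair h.2.1

/-- A second coordinate that is never picked later survives to the end, as does the second
coordinate of the last pair, and a single-leaf network has only one taxon. -/
theorem IsMinimalSeq.isCPS (hA : A.IsLeafLabelled) {T : List (X × X)} (h : A.IsMinimalSeq T)
    (hred : (A.reduceSeq T).IsSingleLeaf) : IsCPS T := by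
  refine ⟨fun c hc => (h.mem_taxa hc).2.2, fun i hi => ?_⟩
  have hT : T ≠ [] := List.ne_nil_of_length_pos (by omega)
  obtain ⟨q, hq⟩ : ∃ q, T.getLast? = some q := ⟨T.getLast hT, List.getLast?_eq_some_getLast hT⟩
  have hsplit : T = T.take i ++ T[i] :: T.drop (i + 1) := by
    rw [List.getElem_cons_drop, List.take_append_drop]
  rw [List.get_eq_getElem]
  have htail := h
  rw [hsplit, isMinimalSeq_append] at htail
  rcases htail.2.snd_mem with hfst | hlast
  · exact Or.inl hfst
  · rw [← reduceSeq_append, ← hsplit] at hlast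
    exact Or.inr ⟨q, hq, hred.eq_of_mem_taxa (hA.reduceSeq T) hlast (h.getLast?_snd_mem hq)⟩

theorem IsPhylo.isMinimalCPS_iff (hA : A.IsPhylo) {S : List (X × X)} :
    IsMinimalCPS S A ↔ Reduces S A ∧ A.IsMinimalSeq S := by
  rw [isMinimalSeq_iff_forall_take]
  exact ⟨fun h => h.2, fun h =>
    ⟨(isMinimalSeq_iff_forall_take.2 h.2).isCPS hA.isLeafLabelled h.1, h⟩⟩

end IsMinimalSeq

/-- The labelling map is kept rather than transported: it is shared by all networks met along a
reduction, and `IsLabelEquivariant` asks `τ` and `σ` to respect it. -/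
def relabel (A : Network X) (τ : ℕ ≃ ℕ) (σ : X ≃ X) : Network X where
  V := A.V.map τ.toEmbedding
  E := A.E.map (τ.prodCongr τ).toEmbedding
  root := τ A.root
  taxa := A.taxa.map σ.toEmbedding
  label := A.label

def IsLabelEquivariant (A : Network X) (τ : ℕ ≃ ℕ) (σ : X ≃ X) : Prop :=
  ∀ t ∈ A.taxa, A.label (σ t) = τ (A.label t)

section Relabel

variable {A : Network X} {τ : ℕ ≃ ℕ} {σ : X ≃ X}

@[simp]
theorem mem_relabel_E {e : ℕ × ℕ} :
    e ∈ (A.relabel τ σ).E ↔ (τ.symm e.1, τ.symm e.2) ∈ A.E := by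
  simp [relabel, Finset.mem_map_equiv, Prod.map]

@[simp]
theorem mem_relabel_taxa {t : X} : t ∈ (A.relabel τ σ).taxa ↔ σ.symm t ∈ A.taxa :=
  Finset.mem_map_equiv

@[simp]
theorem relabel_label : (A.relabel τ σ).label = A.label := rfl

theorem relabel_inj {B : Network X} : A.relabel τ σ = B.relabel τ σ ↔ A = B := by
  refine ⟨fun h => ?_, fun h => h ▸ rfl⟩
  simp only [relabel, mk.injEq, Finset.map_inj, τ.injective.eq_iff] at h
  ext1 <;> simp [h]

theorem relabel_indeg (v : ℕ) : (A.relabel τ σ).indeg (τ v) = A.indeg v := by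
  simp only [indeg, relabel, Finset.filter_map, Finset.card_map]
  congr 1
  apply Finset.filter_congr
  simp

theorem relabel_outdeg (v : ℕ) : (A.relabel τ σ).outdeg (τ v) = A.outdeg v := by
  simp only [outdeg, relabel, Finset.filter_map, Finset.card_map]
  congr 1
  apply Finset.filter_congr
  simp

theorem isRetic_relabel {v : ℕ} : (A.relabel τ σ).IsRetic (τ v) ↔ A.IsRetic v := by
  simp only [IsRetic, relabel_indeg, relabel_outdeg]

theorem isTreeNode_relabel {v : ℕ} : (A.relabel τ σ).IsTreeNode (τ v) ↔ A.IsTreeNode v := by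
  simp only [IsTreeNode, relabel_indeg, relabel_outdeg]

theorem suppress_relabel (v : ℕ) :
    (A.relabel τ σ).suppress (τ v) = (A.suppress v).relabel τ σ := by
  unfold suppress
  rw [relabel_indeg, relabel_outdeg]
  split_ifs
  · ext1
    · simp [relabel, Finset.map_erase]
    · ext ⟨a, b⟩
      simp [mem_parents, mem_children, Equiv.symm_apply_eq]
    all_goals rfl
  · rfl

theorem delEdge_relabel (a b : ℕ) :
    (A.relabel τ σ).delEdge (τ a, τ b) = (A.delEdge (a, b)).relabel τ σ := by
  ext1
  · rfl
  · ext ⟨a', b'⟩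
    simp [delEdge, Equiv.symm_apply_eq]
  all_goals rfl

theorem IsLabelEquivariant.deleteLeaf_relabel (h : A.IsLabelEquivariant τ σ) {t : X}
    (ht : t ∈ A.taxa) : (A.relabel τ σ).deleteLeaf (σ t) = (A.deleteLeaf t).relabel τ σ := by
  ext1
  · simp [deleteLeaf, delVert, relabel, Finset.map_erase, h t ht]
  · ext ⟨a, b⟩
    simp [deleteLeaf, delVert, h t ht, Equiv.symm_apply_eq]
  · rfl
  · simp [deleteLeaf, relabel, Finset.map_erase]
  · rfl

theorem IsLabelEquivariant.isCherry_relabel_iff (h : A.IsLabelEquivariant τ σ) {a b : X} :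
    (A.relabel τ σ).IsCherry (σ a) (σ b) ↔ A.IsCherry a b := by
  simp only [IsCherry, mem_relabel_taxa, Equiv.symm_apply_apply, σ.injective.ne_iff,
    relabel_label]
  refine and_congr_right fun ha => and_congr_right fun hb => and_congr_right fun _ => ?_
  rw [h a ha, h b hb]
  refine τ.symm.exists_congr_left.trans (exists_congr fun p => ?_)
  simp

theorem IsLabelEquivariant.isRetCherry_relabel_iff (h : A.IsLabelEquivariant τ σ) {a b : X} :
    (A.relabel τ σ).IsRetCherry (σ a) (σ b) ↔ A.IsRetCherry a b := by
  simp only [IsRetCherry, mem_relabel_taxa, Equiv.symm_apply_apply, σ.injective.ne_iff,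
    relabel_label]
  refine and_congr_right fun ha => and_congr_right fun hb => and_congr_right fun _ => ?_
  rw [h a ha, h b hb]
  refine τ.symm.exists_congr_left.trans (exists_congr fun px =>
    τ.symm.exists_congr_left.trans (exists_congr fun py => ?_))
  simp [isRetic_relabel, isTreeNode_relabel]

theorem IsLeafLabelled.theParent_relabel (hA : A.IsLeafLabelled) {t : X} (ht : t ∈ A.taxa)
    {q : ℕ} (hq : (q, A.label t) ∈ A.E) :
    (A.relabel τ σ).theParent (τ (A.label t)) = τ (A.theParent (A.label t)) := by
  rw [hA.theParent_label ht hq]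
  refine theParent_eq (by simpa using hq) fun a ha => ?_
  exact (Equiv.symm_apply_eq τ).1 (hA.parent_unique t ht _ _ (by simpa using ha) hq)

theorem IsLabelEquivariant.reducePair (h : A.IsLabelEquivariant τ σ) (c : X × X) :
    (A.reducePair c).IsLabelEquivariant τ σ := fun t ht => by
  rw [reducePair_label]
  exact h t (reducePair_taxa_subset ht)

theorem IsLabelEquivariant.reduceSeq (h : A.IsLabelEquivariant τ σ) (T : List (X × X)) :
    (A.reduceSeq T).IsLabelEquivariant τ σ := by
  induction T generalizing A with
  | nil => exact h
  | cons c T ih => exact ih (h.reducePair c)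

theorem IsLabelEquivariant.reducePair_relabel (hA : A.IsLeafLabelled)
    (h : A.IsLabelEquivariant τ σ) (c : X × X) :
    (A.relabel τ σ).reducePair (Prod.map σ σ c) = (A.reducePair c).relabel τ σ := by
  obtain ⟨a, b⟩ := c
  by_cases h₁ : A.IsCherry a b
  · obtain ⟨ha, -, -, q, hq, -⟩ := id h₁
    rw [reducePair_of_isCherry (c := (a, b)) h₁,
      reducePair_of_isCherry (h.isCherry_relabel_iff.2 h₁)]
    simp only [Prod.map_fst, relabel_label, h a ha]
    rw [hA.theParent_relabel ha hq, h.deleteLeaf_relabel ha, suppress_relabel]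
  have h₁' := mt h.isCherry_relabel_iff.1 h₁
  by_cases h₂ : A.IsRetCherry a b
  · obtain ⟨ha, hb, -, pa, pb, hpa, hpb, -⟩ := id h₂
    rw [reducePair_of_isRetCherry (c := (a, b)) h₁ h₂,
      reducePair_of_isRetCherry h₁' (h.isRetCherry_relabel_iff.2 h₂)]
    simp only [Prod.map_fst, Prod.map_snd, relabel_label, h a ha, h b hb]
    rw [hA.theParent_relabel ha hpa, hA.theParent_relabel hb hpb, delEdge_relabel,
      suppress_relabel, suppress_relabel]
  have h₂' := mt h.isRetCherry_relabel_iff.1 h₂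
  rw [reducePair_of_not_reduciblePair (c := (a, b)) (not_or.2 ⟨h₁, h₂⟩),
    reducePair_of_not_reduciblePair (not_or.2 ⟨h₁', h₂'⟩)]

theorem IsLabelEquivariant.reduceSeq_relabel (hA : A.IsLeafLabelled)
    (h : A.IsLabelEquivariant τ σ) (T : List (X × X)) :
    (A.relabel τ σ).reduceSeq (T.map (Prod.map σ σ)) = (A.reduceSeq T).relabel τ σ := by
  induction T generalizing A with
  | nil => rfl
  | cons c T ih =>
    rw [List.map_cons, reduceSeq_cons, h.reducePair_relabel hA, ih (hA.reducePair c)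
      (h.reducePair c), reduceSeq_cons]

theorem IsLabelEquivariant.isMinimalSeq_relabel_iff (hA : A.IsLeafLabelled)
    (h : A.IsLabelEquivariant τ σ) {T : List (X × X)} :
    (A.relabel τ σ).IsMinimalSeq (T.map (Prod.map σ σ)) ↔ A.IsMinimalSeq T := by
  induction T generalizing A with
  | nil => simp
  | cons c T ih =>
    rw [List.map_cons, isMinimalSeq_cons, h.reducePair_relabel hA, ne_eq, relabel_inj,
      ih (hA.reducePair c) (h.reducePair c), isMinimalSeq_cons]

theorem IsLabelEquivariant.isSingleLeaf_relabel (h : A.IsLabelEquivariant τ σ)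
    (hs : A.IsSingleLeaf) : (A.relabel τ σ).IsSingleLeaf := by
  obtain ⟨x₀, hx₀, hV, hE, hne⟩ := hs
  refine ⟨σ x₀, by simpa using hx₀, ?_, ?_, ?_⟩
  · simp [relabel, hV, h x₀ hx₀]
  · simp [relabel, hE, h x₀ hx₀]
  · simpa [relabel, h x₀ hx₀] using hne

end Relabel

namespace IsLeafLabelled

variable {A : Network X}

theorem isLabelEquivariant_swap (hA : A.IsLeafLabelled) {x z : X} (hx : x ∈ A.taxa)
    (hz : z ∈ A.taxa) :
    A.IsLabelEquivariant (Equiv.swap (A.label x) (A.label z)) (Equiv.swap x z) := by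
  intro t ht
  rcases eq_or_ne t x with rfl | htx
  · simp
  rcases eq_or_ne t z with rfl | htz
  · simp
  rw [Equiv.swap_apply_of_ne_of_ne htx htz, Equiv.swap_apply_of_ne_of_ne
    (fun he => htx (hA.injOn ht hx he)) (fun he => htz (hA.injOn ht hz he))]

theorem relabel_swap_eq_self (hA : A.IsLeafLabelled) {x z : X} (hx : x ∈ A.taxa)
    (hz : z ∈ A.taxa) {p : ℕ} (hpx : (p, A.label x) ∈ A.E) (hpz : (p, A.label z) ∈ A.E) :
    A.relabel (Equiv.swap (A.label x) (A.label z)) (Equiv.swap x z) = A := by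
  set τ := Equiv.swap (A.label x) (A.label z)
  have hfix : ∀ a b, (a, b) ∈ A.E → τ a = a := fun a b hab =>
    Equiv.swap_apply_of_ne_of_ne (fun h => hA.notMem_E x hx b (h ▸ hab))
      (fun h => hA.notMem_E z hz b (h ▸ hab))
  ext1
  · exact Finset.map_swap_of_mem (hA.label_mem x hx) (hA.label_mem z hz)
  · refine Finset.map_eq_of_subset fun e he => ?_
    obtain ⟨⟨a, b⟩, hab, rfl⟩ := Finset.mem_map.1 he
    simp only [Equiv.coe_toEmbedding, Equiv.prodCongr_apply, Prod.map, hfix a b hab]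
    rcases eq_or_ne b (A.label x) with rfl | hbx
    · rw [hA.parent_unique x hx a p hab hpx, Equiv.swap_apply_left]
      exact hpz
    rcases eq_or_ne b (A.label z) with rfl | hbz
    · rw [hA.parent_unique z hz a p hab hpz, Equiv.swap_apply_right]
      exact hpx
    rwa [Equiv.swap_apply_of_ne_of_ne hbx hbz]
  · exact Equiv.swap_apply_of_ne_of_ne (hA.label_ne_root x hx).symm (hA.label_ne_root z hz).symm
  · exact Finset.map_swap_of_mem hx hz
  · rfl

theorem reducePair_sibling (hA : A.IsLeafLabelled) {x y z w : X} (hxy : A.IsCherry x y)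
    (hzw : A.IsCherry z w) {p : ℕ} (hpx : (p, A.label x) ∈ A.E) (hpz : (p, A.label z) ∈ A.E) :
    A.reducePair (z, w) =
      (A.reducePair (x, y)).relabel (Equiv.swap (A.label x) (A.label z)) (Equiv.swap x z) := by
  have hequiv := hA.isLabelEquivariant_swap hxy.1 hzw.1
  have hself := hA.relabel_swap_eq_self hxy.1 hzw.1 hpx hpz
  have hzy := hequiv.isCherry_relabel_iff.2 hxy
  rw [hself, Equiv.swap_apply_left] at hzy
  rw [← hequiv.reducePair_relabel hA, hself, Prod.map_apply, Equiv.swap_apply_left]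
  exact reducePair_eq_of_isCherry hzw hzy

end IsLeafLabelled

end Network

theorem cherry_swap_gives_minimal_CPS_general (X : Type) (N : Network X)
    (hN : N.IsCPN) (S : List (X × X)) (hS : IsMinimalCPS S N)
    (i : ℕ) (hi : i < S.length) (x y : X) (hSi : S.get ⟨i, hi⟩ = (x, y))
    (M : Network X) (hM : M = N.reduceSeq (S.take i))
    (hcherry : M.IsCherry x y)
    (z w : X) (hzw : z ≠ w) (hz : z ∈ M.taxa) (hw : w ∈ M.taxa)
    (p : ℕ)
    (hpx : (p, M.label x) ∈ M.E)
    (hpz : (p, M.label z) ∈ M.E) (hpw : (p, M.label w) ∈ M.E) :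
    IsMinimalCPS
      (S.take i ++ (z, w) ::
        (S.drop (i + 1)).map (fun q =>
          ((if q.1 = z then x else q.1), (if q.2 = z then x else q.2)))) N := by
  have hsplit : S = S.take i ++ (x, y) :: S.drop (i + 1) := by
    rw [← hSi, List.get_eq_getElem, List.getElem_cons_drop, List.take_append_drop]
  have hMl : M.IsLeafLabelled := hM ▸ hN.1.isLeafLabelled.reduceSeq _
  have hzw' : M.IsCherry z w := ⟨hz, hw, hzw, p, hpz, hpw⟩
  rw [hN.1.isMinimalCPS_iff, Reduces, hsplit, reduceSeq_append, isMinimalSeq_append, ← hM,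
    reduceSeq_cons, isMinimalSeq_cons] at hS
  obtain ⟨hred, hminP, -, hminD⟩ := hS
  -- `x` is gone after step `i`, so the substitution `z ↦ x` acts on the tail as the swap of `x, z`
  have hsubst : (S.drop (i + 1)).map (fun q =>
      ((if q.1 = z then x else q.1), (if q.2 = z then x else q.2))) =
      (S.drop (i + 1)).map (Prod.map (Equiv.swap x z) (Equiv.swap x z)) := by
    refine List.map_congr_left fun q hq => ?_
    have hx : x ∉ (M.reducePair (x, y)).taxa := by simp [reducePair_taxa, hcherry]
    obtain ⟨h₁, h₂, -⟩ := hminD.mem_taxa hq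
    rw [Prod.map, Equiv.swap_apply_def, Equiv.swap_apply_def,
      if_neg (ne_of_mem_of_not_mem h₁ hx), if_neg (ne_of_mem_of_not_mem h₂ hx)]
  have hequiv := (hMl.isLabelEquivariant_swap hcherry.1 hz).reducePair (x, y)
  rw [hsubst, hN.1.isMinimalCPS_iff, Reduces, reduceSeq_append, isMinimalSeq_append, ← hM,
    reduceSeq_cons, isMinimalSeq_cons]
  refine ⟨?_, hminP, reducePair_ne_of_isCherry hzw', ?_⟩
  · rw [hMl.reducePair_sibling hcherry hzw' hpx hpz, hequiv.reduceSeq_relabel (hMl.reducePair _)]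
    exact (hequiv.reduceSeq _).isSingleLeaf_relabel hred
  · rw [hMl.reducePair_sibling hcherry hzw' hpx hpz,
      hequiv.isMinimalSeq_relabel_iff (hMl.reducePair _)]
    exact hminD

/-- if `S` is a minimal CPS for the CPN `N` whose `i`-th pair
`(x,y)` reduces a cherry, and `z, w` are distinct leaves sharing the common
parent of `x` and `y` at that step, then replacing the `i`-th pair by `(z,w)`
and substituting `x` for `z` in the remainder gives another minimal CPS
for `N`. -/
theorem cherry_swap_gives_minimal_CPS (X : Type) (N : Network X)
    (hN : N.IsCPN) (S : List (X × X)) (hS : IsMinimalCPS S N)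
    (i : ℕ) (hi : i < S.length) (x y : X) (hSi : S.get ⟨i, hi⟩ = (x, y))
    (M : Network X) (hM : M = N.reduceSeq (S.take i))
    (hcherry : M.IsCherry x y)
    (z w : X) (hzw : z ≠ w) (hz : z ∈ M.taxa) (hw : w ∈ M.taxa)
    (p : ℕ)
    (hpx : (p, M.label x) ∈ M.E) (hpy : (p, M.label y) ∈ M.E)
    (hpz : (p, M.label z) ∈ M.E) (hpw : (p, M.label w) ∈ M.E) :
    IsMinimalCPS
      (S.take i ++ (z, w) ::
        (S.drop (i + 1)).map (fun q =>
          ((if q.1 = z then x else q.1), (if q.2 = z then x else q.2)))) N :=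
  cherry_swap_gives_minimal_CPS_general X N hN S hS i hi x y hSi M hM hcherry z w hzw hz hw p hpx
    hpz hpw
end

section
/- Fix a total order on the taxa set X. Then every cherry-picking network on X has a unique smallest CPS (with respect to the induced lexicographic order on sequences, where shorter sequences precede longer ones), and within a reconstructible CPN class two CPNs on X are isomorphic if and only if they have the same smallest CPS. -/
open scoped Classical

open Network

/-- Lexicographic order on ordered pairs induced by an order on the taxa. -/
def pairLt {X : Type} [LinearOrder X] (a b : X × X) : Prop :=
  a.1 < b.1 ∨ (a.1 = b.1 ∧ a.2 < b.2)

/-- Order on sequences: shorter sequences are smaller; sequences of equal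
length are compared at the first differing position. -/
def seqLE {X : Type} [LinearOrder X] (S T : List (X × X)) : Prop :=
  S.length < T.length ∨
  (S.length = T.length ∧ (S = T ∨ List.Lex pairLt S T))

/-- A smallest CPS reducing `N`. -/
def SmallestCPS {X : Type} [LinearOrder X] (S : List (X × X)) (N : Network X) :
    Prop :=
  IsCPS S ∧ Reduces S N ∧ ∀ T, IsCPS T → Reduces T N → seqLE S T

/-- A class of CPNs is reconstructible if any two of its members sharing a
common minimal CPS are isomorphic. -/
def Reconstructible {X : Type} (C : Network X → Prop) : Prop :=
  ∀ M M' : Network X, C M → C M' →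
    (∃ S, IsMinimalCPS S M ∧ IsMinimalCPS S M') → Isomorphic M M'

/-!
Applying a pair that is not reducible leaves a network unchanged. Dropping such idle pairs from
any reducing sequence yields a CPS (reductions only ever remove first coordinates, and the single
leaf that remains is the second coordinate of the last pair) that is no longer and consists of
pairs of taxa. A smallest CPS can therefore be sought among finitely many sequences, so it exists,
and it is unique because the order is total; it has no idle pairs, so it is minimal.
Isomorphisms commute with every reduction step, so isomorphic networks are reduced by the same
sequences and share their smallest CPS; conversely a common smallest CPS is a common minimal CPS,
and reconstructibility applies.
-/

theorem List.lex_map_iff_of_injective {α β : Type*} {r : β → β → Prop} {f : α → β}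
    (hf : Function.Injective f) {l₁ l₂ : List α} :
    List.Lex r (l₁.map f) (l₂.map f) ↔ List.Lex (fun a b => r (f a) (f b)) l₁ l₂ := by
  induction l₁ generalizing l₂ with
  | nil => cases l₂ <;> simp
  | cons a l₁ ih => cases l₂ <;> simp [List.cons_lex_cons_iff, ih, hf.eq_iff]

theorem List.finite_setOf_length_le_forall_mem {α : Type*} {s : Set α} (hs : s.Finite)
    (n : ℕ) : {l : List α | l.length ≤ n ∧ ∀ a ∈ l, a ∈ s}.Finite := by
  have : Finite s := hs
  refine ((List.finite_length_le s n).image (List.map Subtype.val)).subset ?_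
  rintro l ⟨hl, hs⟩
  lift l to List s using hs
  exact ⟨l, by simpa using hl, rfl⟩

section SeqOrder

variable {X : Type}

def seqKey (S : List (X × X)) : ℕ ×ₗ List (X ×ₗ X) := toLex (S.length, S.map toLex)

theorem seqKey_injective : Function.Injective (seqKey (X := X)) := fun _ _ h =>
  List.map_injective_iff.2 toLex.injective (congrArg (fun k => (ofLex k).2) h)

variable [LinearOrder X]

theorem pairLt_iff_toLex_lt {a b : X × X} : pairLt a b ↔ toLex a < toLex b :=
  Prod.Lex.toLex_lt_toLex.symm

theorem seqLE_iff_seqKey_le {S T : List (X × X)} : seqLE S T ↔ seqKey S ≤ seqKey T := by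
  have hmap : S.map toLex ≤ T.map toLex ↔ S = T ∨ List.Lex pairLt S T := by
    rw [le_iff_eq_or_lt, (List.map_injective_iff.2 toLex.injective).eq_iff]
    have hlt : (fun a b : X × X => toLex a < toLex b) = pairLt :=
      funext₂ fun _ _ => propext pairLt_iff_toLex_lt.symm
    rw [← List.lex_lt, List.lex_map_iff_of_injective toLex.injective, hlt]
  rw [seqLE, seqKey, seqKey, Prod.Lex.toLex_le_toLex, hmap]

theorem seqLE_antisymm {S T : List (X × X)} (h₁ : seqLE S T) (h₂ : seqLE T S) : S = T :=
  seqKey_injective (le_antisymm (seqLE_iff_seqKey_le.1 h₁) (seqLE_iff_seqKey_le.1 h₂))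

end SeqOrder

namespace Network

variable {X : Type} {M M' : Network X}

theorem mem_parents_s6 {a v : ℕ} : a ∈ M.parents v ↔ (a, v) ∈ M.E := by
  simp [parents]

theorem mem_children_s6 {b v : ℕ} : b ∈ M.children v ↔ (v, b) ∈ M.E := by
  simp [children]

theorem indeg_eq_card_parents (v : ℕ) : M.indeg v = (M.parents v).card := by
  rw [parents, Finset.card_image_of_injOn]
  · rfl
  · rintro ⟨a, b⟩ hab ⟨a', b'⟩ hab' (rfl : a = a')
    simp only [Finset.mem_coe, Finset.mem_filter] at hab hab'
    rw [hab.2, hab'.2]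

theorem outdeg_eq_card_children (v : ℕ) : M.outdeg v = (M.children v).card := by
  rw [children, Finset.card_image_of_injOn]
  · rfl
  · rintro ⟨a, b⟩ hab ⟨a', b'⟩ hab' (rfl : b = b')
    simp only [Finset.mem_coe, Finset.mem_filter] at hab hab'
    rw [hab.2, hab'.2]

theorem indeg_eq_zero_iff {w : ℕ} : M.indeg w = 0 ↔ ∀ a, (a, w) ∉ M.E := by
  simp [indeg_eq_card_parents, Finset.eq_empty_iff_forall_notMem, mem_parents_s6]

theorem outdeg_eq_zero_iff {w : ℕ} : M.outdeg w = 0 ↔ ∀ b, (w, b) ∉ M.E := by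
  simp [outdeg_eq_card_children, Finset.eq_empty_iff_forall_notMem, mem_children_s6]

theorem indeg_eq_one_iff {w : ℕ} :
    M.indeg w = 1 ↔ ∃ p, (p, w) ∈ M.E ∧ ∀ a, (a, w) ∈ M.E → a = p := by
  simp only [indeg_eq_card_parents, Finset.card_eq_one, Finset.eq_singleton_iff_unique_mem,
    mem_parents_s6]

theorem theParent_eq_of_parents_eq {w p : ℕ} (h : M.parents w = {p}) : M.theParent w = p := by
  rw [theParent, h, Finset.min_singleton]
  rfl

theorem theParent_spec {w : ℕ} (h : M.indeg w = 1) :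
    (M.theParent w, w) ∈ M.E ∧ ∀ a, (a, w) ∈ M.E → a = M.theParent w := by
  obtain ⟨p, hp⟩ := Finset.card_eq_one.1 ((indeg_eq_card_parents w).symm.trans h)
  rw [theParent_eq_of_parents_eq hp, ← mem_parents_s6, hp]
  simpa [mem_parents_s6] using fun a => (Finset.ext_iff.1 hp a).1

@[simp] theorem suppress_taxa_s6 (v : ℕ) : (M.suppress v).taxa = M.taxa := by
  unfold suppress; split <;> rfl

@[simp] theorem suppress_label_s6 (v : ℕ) : (M.suppress v).label = M.label := by
  unfold suppress; split <;> rfl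

@[simp] theorem suppress_root (v : ℕ) : (M.suppress v).root = M.root := by
  unfold suppress; split <;> rfl

theorem suppress_of_not {v : ℕ} (h : ¬(M.indeg v = 1 ∧ M.outdeg v = 1)) : M.suppress v = M :=
  if_neg h

theorem suppress_V {v : ℕ} (h : M.indeg v = 1 ∧ M.outdeg v = 1) :
    (M.suppress v).V = M.V.erase v := by
  rw [suppress, if_pos h]

theorem mem_suppress_E {v a b : ℕ} (h : M.indeg v = 1 ∧ M.outdeg v = 1) :
    (a, b) ∈ (M.suppress v).E ↔
      (a, b) ∈ M.E ∧ a ≠ v ∧ b ≠ v ∨ (a, v) ∈ M.E ∧ (v, b) ∈ M.E := by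
  rw [suppress, if_pos h]
  simp [mem_parents_s6, mem_children_s6]

theorem mem_suppress_V {v w : ℕ} (hw : w ∈ M.V) (hwv : w ≠ v) : w ∈ (M.suppress v).V := by
  by_cases h : M.indeg v = 1 ∧ M.outdeg v = 1
  · rw [suppress_V h]
    exact Finset.mem_erase.2 ⟨hwv, hw⟩
  · rwa [suppress_of_not h]

/-- The part of `IsPhylo` that survives cherry picking: reductions create vertices of in- and
outdegree one, but keep the leaves, the root and acyclicity intact. -/
structure WellFormed (M : Network X) : Prop where
  injOn_label : Set.InjOn M.label M.taxa
  label_mem_V : ∀ x ∈ M.taxa, M.label x ∈ M.V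
  indeg_label : ∀ x ∈ M.taxa, M.indeg (M.label x) = 1
  outdeg_label : ∀ x ∈ M.taxa, M.outdeg (M.label x) = 0
  root_mem_V : M.root ∈ M.V
  indeg_root : M.indeg M.root = 0
  edge_mem_V : ∀ e ∈ M.E, e.1 ∈ M.V ∧ e.2 ∈ M.V
  acyclic : ∀ v, ¬ Relation.TransGen (fun a b => (a, b) ∈ M.E) v v

theorem WellFormed.of_isPhylo (h : M.IsPhylo) : M.WellFormed := by
  obtain ⟨hroot, hin, -, hedge, hinj, hleaf, -, -, hacyc⟩ := h
  exact ⟨hinj, fun x hx => (hleaf x hx).1, fun x hx => (hleaf x hx).2.1,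
    fun x hx => (hleaf x hx).2.2, hroot, hin, hedge, hacyc⟩

namespace WellFormed

variable (hM : M.WellFormed)
include hM

theorem ne_of_mem_E {a b : ℕ} (h : (a, b) ∈ M.E) : a ≠ b := by
  rintro rfl
  exact hM.acyclic a (.single h)

theorem not_mem_E_label {x : X} (hx : x ∈ M.taxa) (b : ℕ) : (M.label x, b) ∉ M.E :=
  outdeg_eq_zero_iff.1 (hM.outdeg_label x hx) b

theorem not_mem_E_root (a : ℕ) : (a, M.root) ∉ M.E :=
  indeg_eq_zero_iff.1 hM.indeg_root a

theorem theParent_label_mem_E {x : X} (hx : x ∈ M.taxa) :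
    (M.theParent (M.label x), M.label x) ∈ M.E :=
  (theParent_spec (hM.indeg_label x hx)).1

theorem eq_theParent_label {x : X} (hx : x ∈ M.taxa) {a : ℕ} (h : (a, M.label x) ∈ M.E) :
    a = M.theParent (M.label x) :=
  (theParent_spec (hM.indeg_label x hx)).2 a h

theorem root_ne_label {x : X} (hx : x ∈ M.taxa) : M.root ≠ M.label x := fun h =>
  hM.not_mem_E_root _ (h ▸ hM.theParent_label_mem_E hx)

theorem acyclic_of_le (h : ∀ a b, (a, b) ∈ M'.E → Relation.TransGen (fun a b => (a, b) ∈ M.E) a b)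
    (v : ℕ) : ¬ Relation.TransGen (fun a b => (a, b) ∈ M'.E) v v := fun hv =>
  hM.acyclic v (Relation.TransGen.lift' id h v v hv)

theorem of_subnetwork (hE : M'.E ⊆ M.E) (hroot : M'.root = M.root)
    (hlabel : M'.label = M.label) (htaxa : M'.taxa ⊆ M.taxa) (hrootV : M'.root ∈ M'.V)
    (hedgeV : ∀ e ∈ M'.E, e.1 ∈ M'.V ∧ e.2 ∈ M'.V)
    (hleaf : ∀ x ∈ M'.taxa, (M.theParent (M.label x), M.label x) ∈ M'.E) :
    M'.WellFormed where
  injOn_label := hlabel ▸ hM.injOn_label.mono htaxa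
  label_mem_V x hx := hlabel ▸ (hedgeV _ (hleaf x hx)).2
  indeg_label x hx := hlabel ▸ indeg_eq_one_iff.2
    ⟨_, hleaf x hx, fun _ ha => hM.eq_theParent_label (htaxa hx) (hE ha)⟩
  outdeg_label _ hx := hlabel ▸ outdeg_eq_zero_iff.2
    fun b hb => hM.not_mem_E_label (htaxa hx) b (hE hb)
  root_mem_V := hrootV
  indeg_root := indeg_eq_zero_iff.2 fun a ha => hM.not_mem_E_root a (hroot ▸ hE ha)
  edge_mem_V := hedgeV
  acyclic := hM.acyclic_of_le fun _ _ h => .single (hE h)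

end WellFormed

/-- The middle stage of `reducePair` on a cherry `(x, y)`: the leaf `x` is deleted, its parent
not yet suppressed. -/
noncomputable def removeLeaf (M : Network X) (x : X) : Network X :=
  { M.delVert (M.label x) with taxa := M.taxa.erase x }

theorem WellFormed.removeLeaf (hM : M.WellFormed) {x : X} (hx : x ∈ M.taxa) :
    (M.removeLeaf x).WellFormed := by
  refine hM.of_subnetwork (Finset.filter_subset _ _) rfl rfl (Finset.erase_subset _ _)
    (Finset.mem_erase.2 ⟨hM.root_ne_label hx, hM.root_mem_V⟩) ?_ ?_
  · rintro ⟨a, b⟩ he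
    obtain ⟨he, ha, hb⟩ := Finset.mem_filter.1 he
    exact ⟨Finset.mem_erase.2 ⟨ha, (hM.edge_mem_V _ he).1⟩,
      Finset.mem_erase.2 ⟨hb, (hM.edge_mem_V _ he).2⟩⟩
  · intro z hz
    obtain ⟨hzx, hz⟩ := Finset.mem_erase.1 hz
    have hpz := hM.theParent_label_mem_E hz
    have hθ : M.theParent (M.label z) ≠ M.label x := fun h => hM.not_mem_E_label hx _ (h ▸ hpz)
    have hℓ : M.label z ≠ M.label x := fun h => hzx (hM.injOn_label hz hx h)
    exact Finset.mem_filter.2 ⟨hpz, hθ, hℓ⟩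

theorem WellFormed.delEdge (hM : M.WellFormed) {a b c : ℕ} (hb : (b, c) ∈ M.E) :
    (M.delEdge (a, b)).WellFormed := by
  refine hM.of_subnetwork (Finset.erase_subset _ _) rfl rfl subset_rfl hM.root_mem_V
    (fun e he => hM.edge_mem_V e (Finset.mem_of_mem_erase he)) fun z hz => ?_
  refine Finset.mem_erase.2 ⟨fun h => ?_, hM.theParent_label_mem_E hz⟩
  exact hM.not_mem_E_label hz c (by rw [(Prod.mk.inj h).2]; exact hb)

theorem WellFormed.label_ne_of_outdeg_eq_one (hM : M.WellFormed) {x : X} (hx : x ∈ M.taxa)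
    {v : ℕ} (hv : M.outdeg v = 1) : M.label x ≠ v := fun h => by
  simpa [h, hv] using hM.outdeg_label x hx

theorem WellFormed.indeg_suppress_label (hM : M.WellFormed) {v : ℕ}
    (hv : M.indeg v = 1 ∧ M.outdeg v = 1) {x : X} (hx : x ∈ M.taxa) :
    (M.suppress v).indeg (M.label x) = 1 := by
  obtain ⟨q, hq, hq_uniq⟩ := indeg_eq_one_iff.1 hv.1
  have hE {a b : ℕ} := mem_suppress_E (a := a) (b := b) hv
  have hp := hM.theParent_label_mem_E hx
  rw [indeg_eq_one_iff]
  by_cases hpv : M.theParent (M.label x) = v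
  · refine ⟨q, hE.2 (.inr ⟨hq, hpv ▸ hp⟩), fun a ha => ?_⟩
    rcases hE.1 ha with ⟨ha, hav, -⟩ | ⟨ha, -⟩
    · exact absurd (hpv ▸ hM.eq_theParent_label hx ha) hav
    · exact hq_uniq a ha
  · refine ⟨_, hE.2 (.inl ⟨hp, hpv, hM.label_ne_of_outdeg_eq_one hx hv.2⟩), fun a ha => ?_⟩
    rcases hE.1 ha with ⟨ha, -, -⟩ | ⟨-, ha⟩
    · exact hM.eq_theParent_label hx ha
    · exact absurd (hM.eq_theParent_label hx ha).symm hpv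

theorem WellFormed.suppress (hM : M.WellFormed) (v : ℕ) : (M.suppress v).WellFormed := by
  by_cases hv : M.indeg v = 1 ∧ M.outdeg v = 1
  swap
  · rwa [suppress_of_not hv]
  have hE {a b : ℕ} := mem_suppress_E (a := a) (b := b) hv
  have hV := suppress_V hv
  have hroot_ne : M.root ≠ v := fun h => by simpa [h, hv.1] using hM.indeg_root
  constructor
  · simpa using hM.injOn_label
  · intro x hx
    rw [suppress_taxa_s6] at hx
    simpa [hV] using ⟨hM.label_ne_of_outdeg_eq_one hx hv.2, hM.label_mem_V x hx⟩
  · intro x hx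
    rw [suppress_taxa_s6] at hx
    rw [suppress_label_s6]
    exact hM.indeg_suppress_label hv hx
  · intro x hx
    rw [suppress_taxa_s6] at hx
    rw [suppress_label_s6, outdeg_eq_zero_iff]
    intro b hb
    rcases hE.1 hb with ⟨hb, -, -⟩ | ⟨hb, -⟩ <;> exact hM.not_mem_E_label hx _ hb
  · simpa [hV] using ⟨hroot_ne, hM.root_mem_V⟩
  · rw [suppress_root, indeg_eq_zero_iff]
    intro a ha
    rcases hE.1 ha with ⟨ha, -, -⟩ | ⟨-, ha⟩ <;> exact hM.not_mem_E_root _ ha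
  · rintro ⟨a, b⟩ hab
    rw [hV, Finset.mem_erase, Finset.mem_erase]
    rcases hE.1 hab with ⟨hab, hav, hbv⟩ | ⟨hav, hvb⟩
    · exact ⟨⟨hav, (hM.edge_mem_V _ hab).1⟩, hbv, (hM.edge_mem_V _ hab).2⟩
    · exact ⟨⟨hM.ne_of_mem_E hav, (hM.edge_mem_V _ hav).1⟩,
        (hM.ne_of_mem_E hvb).symm, (hM.edge_mem_V _ hvb).2⟩
  · refine hM.acyclic_of_le fun a b hab => ?_
    rcases hE.1 hab with ⟨hab, -, -⟩ | ⟨hav, hvb⟩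
    · exact .single hab
    · exact .tail (.single hav) hvb

theorem reducePair_of_isCherry_s6 {c : X × X} (h : M.IsCherry c.1 c.2) :
    M.reducePair c = (M.removeLeaf c.1).suppress (M.theParent (M.label c.1)) :=
  if_pos h

theorem reducePair_of_isRetCherry_s6 {c : X × X} (h₁ : ¬ M.IsCherry c.1 c.2)
    (h₂ : M.IsRetCherry c.1 c.2) :
    M.reducePair c = ((M.delEdge (M.theParent (M.label c.2), M.theParent (M.label c.1))).suppress
      (M.theParent (M.label c.2))).suppress (M.theParent (M.label c.1)) := by
  rw [reducePair, if_neg h₁, if_pos h₂]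

theorem reducePair_of_not_reduciblePair_s6 {c : X × X} (h : ¬ M.ReduciblePair c.1 c.2) :
    M.reducePair c = M := by
  rw [ReduciblePair, not_or] at h
  rw [reducePair, if_neg h.1, if_neg h.2]

theorem ReduciblePair.of_reducePair_ne {c : X × X} (h : M.reducePair c ≠ M) :
    M.ReduciblePair c.1 c.2 :=
  by_contra fun hc => h (reducePair_of_not_reduciblePair_s6 hc)

theorem ReduciblePair.mem_taxa_s6 {x y : X} (h : M.ReduciblePair x y) :
    x ∈ M.taxa ∧ y ∈ M.taxa ∧ x ≠ y := by
  rcases h with ⟨hx, hy, hxy, -⟩ | ⟨hx, hy, hxy, -⟩ <;> exact ⟨hx, hy, hxy⟩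

theorem WellFormed.reducePair (hM : M.WellFormed) (c : X × X) : (M.reducePair c).WellFormed := by
  by_cases h₁ : M.IsCherry c.1 c.2
  · rw [reducePair_of_isCherry_s6 h₁]
    exact (hM.removeLeaf h₁.1).suppress _
  by_cases h₂ : M.IsRetCherry c.1 c.2
  · rw [reducePair_of_isRetCherry_s6 h₁ h₂]
    exact ((hM.delEdge (hM.theParent_label_mem_E h₂.1)).suppress _).suppress _
  rw [reducePair_of_not_reduciblePair_s6 (not_or.2 ⟨h₁, h₂⟩)]
  exact hM

theorem reducePair_taxa_s6 (c : X × X) :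
    (M.reducePair c).taxa = if M.IsCherry c.1 c.2 then M.taxa.erase c.1 else M.taxa := by
  unfold reducePair
  split_ifs <;> simp [delEdge]

theorem reducePair_taxa_subset_s6 (c : X × X) : (M.reducePair c).taxa ⊆ M.taxa := by
  rw [reducePair_taxa_s6]
  split_ifs
  exacts [Finset.erase_subset _ _, subset_rfl]

theorem mem_reducePair_taxa {c : X × X} {b : X} (hb : b ∈ M.taxa) (hbc : b ≠ c.1) :
    b ∈ (M.reducePair c).taxa := by
  rw [reducePair_taxa_s6]
  split_ifs
  exacts [Finset.mem_erase.2 ⟨hbc, hb⟩, hb]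

theorem reduceSeq_cons_s6 (c : X × X) (S : List (X × X)) :
    M.reduceSeq (c :: S) = (M.reducePair c).reduceSeq S := rfl

theorem WellFormed.reduceSeq (hM : M.WellFormed) (S : List (X × X)) :
    (M.reduceSeq S).WellFormed := by
  induction S generalizing M with
  | nil => exact hM
  | cons c S ih => exact ih (hM.reducePair c)

theorem WellFormed.eq_of_isSingleLeaf (hM : M.WellFormed) (hS : M.IsSingleLeaf) {x y : X}
    (hx : x ∈ M.taxa) (hy : y ∈ M.taxa) : x = y := by
  obtain ⟨z, hz, hV, -, -⟩ := hS
  have h {w : X} (hw : w ∈ M.taxa) : w = z := by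
    have hwV := hM.label_mem_V w hw
    rw [hV, Finset.mem_insert, Finset.mem_singleton] at hwV
    exact hwV.elim (fun h => absurd h.symm (hM.root_ne_label hw)) (hM.injOn_label hw hz)
  rw [h hx, h hy]

theorem IsCPS.cons {c : X × X} {T : List (X × X)} (hT : IsCPS T) (hc : c.1 ≠ c.2)
    (hlast : c.2 ∈ T.map Prod.fst ∨ c.2 = ((c :: T).getLast (List.cons_ne_nil _ _)).2) :
    IsCPS (c :: T) := by
  refine ⟨by simpa [hc] using hT.1, ?_⟩
  rintro (_ | j) hj
  · rcases hlast with h | h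
    · exact .inl (by simpa using h)
    · exact .inr ⟨_, List.getLast?_eq_some_getLast _, h⟩
  · have hj : j < T.length := by simpa using hj
    rcases hT.2 j hj with h | ⟨q, hq, h⟩
    · exact .inl (by simpa using h)
    · refine .inr ⟨q, ?_, by simpa using h⟩
      rw [List.getLast?_cons, hq]
      rfl

/-- The pairs of `S` that change the network when `S` is applied to `M`. -/
noncomputable def effectiveSeq (M : Network X) : List (X × X) → List (X × X)
  | [] => []
  | c :: S => if M.reducePair c = M then M.effectiveSeq S else c :: (M.reducePair c).effectiveSeq S

variable {c : X × X} {S : List (X × X)}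

theorem effectiveSeq_cons_of_eq (h : M.reducePair c = M) :
    M.effectiveSeq (c :: S) = M.effectiveSeq S :=
  if_pos h

theorem effectiveSeq_cons_of_ne (h : M.reducePair c ≠ M) :
    M.effectiveSeq (c :: S) = c :: (M.reducePair c).effectiveSeq S :=
  if_neg h

theorem reduceSeq_effectiveSeq (M : Network X) (S : List (X × X)) :
    M.reduceSeq (M.effectiveSeq S) = M.reduceSeq S := by
  induction S generalizing M with
  | nil => rfl
  | cons c S ih =>
    by_cases h : M.reducePair c = M
    · rw [effectiveSeq_cons_of_eq h, reduceSeq_cons_s6, h, ih]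
    · rw [effectiveSeq_cons_of_ne h, reduceSeq_cons_s6, reduceSeq_cons_s6, ih]

theorem effectiveSeq_sublist (M : Network X) (S : List (X × X)) : (M.effectiveSeq S).Sublist S := by
  induction S generalizing M with
  | nil => exact .slnil
  | cons c S ih =>
    by_cases h : M.reducePair c = M
    · rw [effectiveSeq_cons_of_eq h]
      exact (ih M).cons c
    · rw [effectiveSeq_cons_of_ne h]
      exact (ih _).cons_cons c

theorem mem_taxa_of_mem_effectiveSeq {p : X × X} (h : p ∈ M.effectiveSeq S) :
    p ∈ M.taxa ×ˢ M.taxa := by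
  induction S generalizing M with
  | nil => simp [effectiveSeq] at h
  | cons c S ih =>
    by_cases hc : M.reducePair c = M
    · rw [effectiveSeq_cons_of_eq hc] at h
      exact ih h
    · rw [effectiveSeq_cons_of_ne hc, List.mem_cons] at h
      rcases h with rfl | h
      · obtain ⟨h₁, h₂, -⟩ := (ReduciblePair.of_reducePair_ne hc).mem_taxa_s6
        exact Finset.mem_product.2 ⟨h₁, h₂⟩
      · exact Finset.product_subset_product (reducePair_taxa_subset_s6 c)
          (reducePair_taxa_subset_s6 c) (ih h)

theorem reduceSeq_take_succ_ne_of_effectiveSeq_eq (h : M.effectiveSeq S = S) :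
    ∀ i < S.length, M.reduceSeq (S.take (i + 1)) ≠ M.reduceSeq (S.take i) := by
  induction S generalizing M with
  | nil => simp
  | cons c S ih =>
    have hc : M.reducePair c ≠ M := fun hc => by
      have := (M.effectiveSeq_sublist S).length_le
      rw [← effectiveSeq_cons_of_eq hc, h, List.length_cons] at this
      omega
    rw [effectiveSeq_cons_of_ne hc, List.cons.injEq] at h
    rintro (_ | i) hi
    · exact hc
    · exact ih h.2 i (by simpa using hi)

theorem mem_taxa_reduceSeq_of_not_mem {b : X} (hb : b ∈ M.taxa)
    (hm : b ∉ (M.effectiveSeq S).map Prod.fst) : b ∈ (M.reduceSeq S).taxa := by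
  induction S generalizing M with
  | nil => exact hb
  | cons c S ih =>
    rw [reduceSeq_cons_s6]
    by_cases hc : M.reducePair c = M
    · rw [effectiveSeq_cons_of_eq hc] at hm
      rw [hc]
      exact ih hb hm
    · rw [effectiveSeq_cons_of_ne hc, List.map_cons, List.mem_cons, not_or] at hm
      exact ih (mem_reducePair_taxa hb hm.1) hm.2

theorem getLast_effectiveSeq_snd_mem_taxa (h : M.effectiveSeq S ≠ []) :
    ((M.effectiveSeq S).getLast h).2 ∈ (M.reduceSeq S).taxa := by
  induction S generalizing M with
  | nil => simp [effectiveSeq] at h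
  | cons c S ih =>
    rw [reduceSeq_cons_s6]
    by_cases hc : M.reducePair c = M
    · simp_rw [effectiveSeq_cons_of_eq hc] at h ⊢
      rw [hc]
      exact ih h
    simp_rw [effectiveSeq_cons_of_ne hc] at h ⊢
    by_cases hS : (M.reducePair c).effectiveSeq S = []
    · obtain ⟨-, hy, hxy⟩ := (ReduciblePair.of_reducePair_ne hc).mem_taxa_s6
      simp_rw [hS]
      exact mem_taxa_reduceSeq_of_not_mem (mem_reducePair_taxa hy hxy.symm) (by simp [hS])
    · rw [List.getLast_cons hS]
      exact ih hS

theorem WellFormed.isCPS_effectiveSeq (hM : M.WellFormed) (h : (M.reduceSeq S).IsSingleLeaf) :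
    IsCPS (M.effectiveSeq S) := by
  induction S generalizing M with
  | nil => exact ⟨by simp [effectiveSeq], by simp [effectiveSeq]⟩
  | cons c S ih =>
    by_cases hc : M.reducePair c = M
    · rw [effectiveSeq_cons_of_eq hc]
      rw [reduceSeq_cons_s6, hc] at h
      exact ih hM h
    have hlast := M.getLast_effectiveSeq_snd_mem_taxa (S := c :: S)
      (by simp [effectiveSeq_cons_of_ne hc])
    simp_rw [effectiveSeq_cons_of_ne hc] at hlast ⊢
    obtain ⟨-, hy, hxy⟩ := (ReduciblePair.of_reducePair_ne hc).mem_taxa_s6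
    refine (ih (hM.reducePair c) h).cons hxy (or_iff_not_imp_left.2 fun hm => ?_)
    exact ((hM.reduceSeq _).eq_of_isSingleLeaf h
      (mem_taxa_reduceSeq_of_not_mem (M := M.reducePair c) (mem_reducePair_taxa hy hxy.symm) hm)
      hlast)

theorem Reduces.effectiveSeq (h : Reduces S M) : Reduces (M.effectiveSeq S) M := by
  rwa [Reduces, reduceSeq_effectiveSeq]

end Network

section SmallestCPS

variable {X : Type} [LinearOrder X] {N : Network X} {S T : List (X × X)}

theorem seqLE.length_le (h : seqLE S T) : S.length ≤ T.length := by
  rcases h with h | ⟨h, -⟩ <;> omega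

theorem seqLE_effectiveSeq (N : Network X) (S : List (X × X)) : seqLE (N.effectiveSeq S) S := by
  have hsub := N.effectiveSeq_sublist S
  rcases hsub.length_le.lt_or_eq with h | h
  · exact .inl h
  · exact .inr ⟨h, .inl (hsub.eq_of_length h)⟩

theorem exists_smallestCPS (hN : N.WellFormed) (h : ∃ S, Reduces S N) :
    ∃ S, SmallestCPS S N := by
  obtain ⟨S₀, hS₀⟩ := h
  set A := {S | IsCPS S ∧ Reduces S N ∧ S.length ≤ S₀.length ∧ ∀ p ∈ S, p ∈ N.taxa ×ˢ N.taxa}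
  have hA : A.Finite :=
    (List.finite_setOf_length_le_forall_mem (N.taxa ×ˢ N.taxa).finite_toSet S₀.length).subset
      fun S hS => ⟨hS.2.2.1, hS.2.2.2⟩
  have hmem (T : List (X × X)) (hT : Reduces T N) (hlen : T.length ≤ S₀.length) :
      N.effectiveSeq T ∈ A :=
    ⟨hN.isCPS_effectiveSeq hT, hT.effectiveSeq,
      (N.effectiveSeq_sublist T).length_le.trans hlen,
      fun _ hp => Network.mem_taxa_of_mem_effectiveSeq hp⟩
  obtain ⟨m, hmA, hmin⟩ := Set.exists_min_image A seqKey hA ⟨_, hmem S₀ hS₀ le_rfl⟩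
  refine ⟨m, hmA.1, hmA.2.1, fun T _ hT => ?_⟩
  rcases le_or_gt T.length S₀.length with hlen | hlen
  · exact seqLE_iff_seqKey_le.2 <|
      (hmin _ (hmem T hT hlen)).trans (seqLE_iff_seqKey_le.1 (seqLE_effectiveSeq N T))
  · exact .inl (hmA.2.2.1.trans_lt hlen)

theorem SmallestCPS.unique (hS : SmallestCPS S N) (hT : SmallestCPS T N) : S = T :=
  seqLE_antisymm (hS.2.2 T hT.1 hT.2.1) (hT.2.2 S hS.1 hS.2.1)

theorem SmallestCPS.effectiveSeq_eq (hN : N.WellFormed) (hS : SmallestCPS S N) :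
    N.effectiveSeq S = S := by
  have hsub := N.effectiveSeq_sublist S
  refine hsub.eq_of_length (le_antisymm hsub.length_le ?_)
  exact (hS.2.2 _ (hN.isCPS_effectiveSeq hS.2.1) hS.2.1.effectiveSeq).length_le

theorem SmallestCPS.isMinimalCPS (hN : N.WellFormed) (hS : SmallestCPS S N) :
    IsMinimalCPS S N :=
  ⟨hS.1, hS.2.1, Network.reduceSeq_take_succ_ne_of_effectiveSeq_eq (hS.effectiveSeq_eq hN)⟩

end SmallestCPS

namespace Network

variable {X : Type} {f : ℕ → ℕ} {M M' : Network X}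

structure IsIsoMap (f : ℕ → ℕ) (M M' : Network X) : Prop where
  taxa_eq : M.taxa = M'.taxa
  bijOn : Set.BijOn f M.V M'.V
  mem_E_iff : ∀ u ∈ M.V, ∀ v ∈ M.V, (u, v) ∈ M.E ↔ (f u, f v) ∈ M'.E
  map_root : f M.root = M'.root
  map_label : ∀ x ∈ M.taxa, f (M.label x) = M'.label x

theorem isomorphic_iff_exists_isIsoMap : M.Isomorphic M' ↔ ∃ f, IsIsoMap f M M' :=
  ⟨fun ⟨h₁, f, h₂, h₃, h₄, h₅⟩ => ⟨f, h₁, h₂, h₃, h₄, h₅⟩,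
    fun ⟨f, h₁, h₂, h₃, h₄, h₅⟩ => ⟨h₁, f, h₂, h₃, h₄, h₅⟩⟩

namespace IsIsoMap

variable (h : IsIsoMap f M M')
include h

theorem symm (hM : M.WellFormed) : IsIsoMap (Function.invFunOn f M.V) M' M := by
  have hinv : Set.InvOn (Function.invFunOn f M.V) f M.V M'.V := h.bijOn.invOn_invFunOn
  have hbij := Set.BijOn.symm hinv.symm h.bijOn
  refine ⟨h.taxa_eq.symm, hbij, fun u hu v hv => ?_, ?_, fun x hx => ?_⟩
  · rw [h.mem_E_iff _ (hbij.mapsTo hu) _ (hbij.mapsTo hv), hinv.2 hu, hinv.2 hv]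
  · rw [← h.map_root, hinv.1 hM.root_mem_V]
  · rw [← h.taxa_eq] at hx
    rw [← h.map_label x hx, hinv.1 (hM.label_mem_V x hx)]

theorem map_mem_E (hM : M.WellFormed) {a b : ℕ} (hab : (a, b) ∈ M.E) : (f a, f b) ∈ M'.E :=
  (h.mem_E_iff a (hM.edge_mem_V _ hab).1 b (hM.edge_mem_V _ hab).2).1 hab

theorem exists_preimage_E (hM' : M'.WellFormed) {a' b' : ℕ} (hab : (a', b') ∈ M'.E) :
    ∃ a ∈ M.V, ∃ b ∈ M.V, f a = a' ∧ f b = b' ∧ (a, b) ∈ M.E := by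
  obtain ⟨a, ha, rfl⟩ := h.bijOn.surjOn (hM'.edge_mem_V _ hab).1
  obtain ⟨b, hb, rfl⟩ := h.bijOn.surjOn (hM'.edge_mem_V _ hab).2
  exact ⟨a, ha, b, hb, rfl, rfl, (h.mem_E_iff a ha b hb).2 hab⟩

theorem parents_eq (hM : M.WellFormed) (hM' : M'.WellFormed) {v : ℕ} (hv : v ∈ M.V) :
    M'.parents (f v) = (M.parents v).image f := by
  ext a'
  simp only [mem_parents_s6, Finset.mem_image]
  constructor
  · intro ha'
    obtain ⟨a, -, b, hb, rfl, hbv, hab⟩ := h.exists_preimage_E hM' ha'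
    exact ⟨a, h.bijOn.injOn hb hv hbv ▸ hab, rfl⟩
  · rintro ⟨a, hav, rfl⟩
    exact h.map_mem_E hM hav

theorem children_eq (hM : M.WellFormed) (hM' : M'.WellFormed) {v : ℕ} (hv : v ∈ M.V) :
    M'.children (f v) = (M.children v).image f := by
  ext b'
  simp only [mem_children_s6, Finset.mem_image]
  constructor
  · intro hb'
    obtain ⟨a, ha, b, -, hav, rfl, hab⟩ := h.exists_preimage_E hM' hb'
    exact ⟨b, h.bijOn.injOn ha hv hav ▸ hab, rfl⟩
  · rintro ⟨b, hvb, rfl⟩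
    exact h.map_mem_E hM hvb

theorem indeg_eq (hM : M.WellFormed) (hM' : M'.WellFormed) {v : ℕ} (hv : v ∈ M.V) :
    M'.indeg (f v) = M.indeg v := by
  rw [indeg_eq_card_parents, indeg_eq_card_parents, h.parents_eq hM hM' hv,
    Finset.card_image_of_injOn (h.bijOn.injOn.mono fun a ha =>
      (hM.edge_mem_V _ (mem_parents_s6.1 ha)).1)]

theorem outdeg_eq (hM : M.WellFormed) (hM' : M'.WellFormed) {v : ℕ} (hv : v ∈ M.V) :
    M'.outdeg (f v) = M.outdeg v := by
  rw [outdeg_eq_card_children, outdeg_eq_card_children, h.children_eq hM hM' hv,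
    Finset.card_image_of_injOn (h.bijOn.injOn.mono fun b hb =>
      (hM.edge_mem_V _ (mem_children_s6.1 hb)).2)]

theorem theParent_label (hM : M.WellFormed) (hM' : M'.WellFormed) {x : X} (hx : x ∈ M.taxa) :
    M'.theParent (M'.label x) = f (M.theParent (M.label x)) := by
  have hpx := h.map_mem_E hM (hM.theParent_label_mem_E hx)
  rw [h.map_label x hx] at hpx
  exact (hM'.eq_theParent_label (h.taxa_eq ▸ hx) hpx).symm

theorem isCherry (hM : M.WellFormed) {x y : X} (hc : M.IsCherry x y) : M'.IsCherry x y := by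
  obtain ⟨hx, hy, hxy, p, hpx, hpy⟩ := hc
  refine ⟨h.taxa_eq ▸ hx, h.taxa_eq ▸ hy, hxy, f p, ?_, ?_⟩
  · simpa [h.map_label x hx] using h.map_mem_E hM hpx
  · simpa [h.map_label y hy] using h.map_mem_E hM hpy

theorem isRetCherry (hM : M.WellFormed) (hM' : M'.WellFormed) {x y : X}
    (hc : M.IsRetCherry x y) : M'.IsRetCherry x y := by
  obtain ⟨hx, hy, hxy, px, py, hpx, hpy, ⟨hr₁, hr₂⟩, ⟨ht₁, ht₂⟩, hpp⟩ := hc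
  have hpxV := (hM.edge_mem_V _ hpx).1
  have hpyV := (hM.edge_mem_V _ hpy).1
  refine ⟨h.taxa_eq ▸ hx, h.taxa_eq ▸ hy, hxy, f px, f py, ?_, ?_, ?_, ?_, h.map_mem_E hM hpp⟩
  · simpa [h.map_label x hx] using h.map_mem_E hM hpx
  · simpa [h.map_label y hy] using h.map_mem_E hM hpy
  · rw [IsRetic, h.indeg_eq hM hM' hpxV, h.outdeg_eq hM hM' hpxV]
    exact ⟨hr₁, hr₂⟩
  · rw [IsTreeNode, h.indeg_eq hM hM' hpyV, h.outdeg_eq hM hM' hpyV]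
    exact ⟨ht₁, ht₂⟩

theorem isCherry_iff (hM : M.WellFormed) (hM' : M'.WellFormed) {x y : X} :
    M.IsCherry x y ↔ M'.IsCherry x y :=
  ⟨h.isCherry hM, (h.symm hM).isCherry hM'⟩

theorem isRetCherry_iff (hM : M.WellFormed) (hM' : M'.WellFormed) {x y : X} :
    M.IsRetCherry x y ↔ M'.IsRetCherry x y :=
  ⟨h.isRetCherry hM hM', (h.symm hM).isRetCherry hM' hM⟩

theorem removeLeaf (hM : M.WellFormed) {x : X} (hx : x ∈ M.taxa) :
    IsIsoMap f (M.removeLeaf x) (M'.removeLeaf x) := by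
  have hxV := hM.label_mem_V x hx
  have hfx := h.map_label x hx
  refine ⟨by simp [Network.removeLeaf, h.taxa_eq], ?_, fun u hu w hw => ?_, h.map_root,
    fun z hz => h.map_label z (Finset.mem_of_mem_erase hz)⟩
  · change Set.BijOn f ↑(M.V.erase (M.label x)) ↑(M'.V.erase (M'.label x))
    rw [Finset.coe_erase, Finset.coe_erase, ← hfx]
    exact h.bijOn.sdiff_singleton hxV
  · change u ∈ M.V.erase _ at hu
    change w ∈ M.V.erase _ at hw
    change (u, w) ∈ M.E.filter _ ↔ (f u, f w) ∈ M'.E.filter _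
    rw [Finset.mem_erase] at hu hw
    simp only [Finset.mem_filter, h.mem_E_iff u hu.2 w hw.2, ← hfx,
      h.bijOn.injOn.ne_iff hu.2 hxV, h.bijOn.injOn.ne_iff hw.2 hxV]

theorem delEdge {a b : ℕ} (ha : a ∈ M.V) (hb : b ∈ M.V) :
    IsIsoMap f (M.delEdge (a, b)) (M'.delEdge (f a, f b)) := by
  refine ⟨h.taxa_eq, h.bijOn, fun u hu w hw => ?_, h.map_root, h.map_label⟩
  change (u, w) ∈ M.E.erase _ ↔ (f u, f w) ∈ M'.E.erase _
  simp only [Finset.mem_erase, h.mem_E_iff u hu w hw, ne_eq, Prod.mk.injEq,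
    h.bijOn.injOn.eq_iff hu ha, h.bijOn.injOn.eq_iff hw hb]

theorem suppress (hM : M.WellFormed) (hM' : M'.WellFormed) {v : ℕ} (hv : v ∈ M.V) :
    IsIsoMap f (M.suppress v) (M'.suppress (f v)) := by
  have hdeg : (M'.indeg (f v) = 1 ∧ M'.outdeg (f v) = 1) ↔ (M.indeg v = 1 ∧ M.outdeg v = 1) := by
    rw [h.indeg_eq hM hM' hv, h.outdeg_eq hM hM' hv]
  by_cases hc : M.indeg v = 1 ∧ M.outdeg v = 1
  swap
  · rwa [suppress_of_not hc, suppress_of_not (hdeg.not.2 hc)]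
  have hc' := hdeg.2 hc
  refine ⟨by simpa using h.taxa_eq, ?_, fun u hu w hw => ?_, by simpa using h.map_root,
    by simpa using h.map_label⟩
  · rw [suppress_V hc, suppress_V hc', Finset.coe_erase, Finset.coe_erase]
    exact h.bijOn.sdiff_singleton hv
  · rw [suppress_V hc, Finset.mem_erase] at hu hw
    rw [mem_suppress_E hc, mem_suppress_E hc', h.mem_E_iff u hu.2 w hw.2,
      h.mem_E_iff u hu.2 v hv, h.mem_E_iff v hv w hw.2, h.bijOn.injOn.ne_iff hu.2 hv,
      h.bijOn.injOn.ne_iff hw.2 hv]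

theorem reducePair (hM : M.WellFormed) (hM' : M'.WellFormed) (c : X × X) :
    IsIsoMap f (M.reducePair c) (M'.reducePair c) := by
  by_cases h₁ : M.IsCherry c.1 c.2
  · have hx := h₁.1
    have hp := hM.theParent_label_mem_E hx
    rw [reducePair_of_isCherry_s6 h₁, reducePair_of_isCherry_s6 ((h.isCherry_iff hM hM').1 h₁),
      h.theParent_label hM hM' hx]
    refine (h.removeLeaf hM hx).suppress (hM.removeLeaf hx) (hM'.removeLeaf (h.taxa_eq ▸ hx)) ?_
    exact Finset.mem_erase.2 ⟨hM.ne_of_mem_E hp, (hM.edge_mem_V _ hp).1⟩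
  have h₁' := (h.isCherry_iff hM hM').not.1 h₁
  by_cases h₂ : M.IsRetCherry c.1 c.2
  · have hpx := hM.theParent_label_mem_E h₂.1
    have hpy := hM.theParent_label_mem_E h₂.2.1
    have hpyV := (hM.edge_mem_V _ hpy).1
    have hpxV := (hM.edge_mem_V _ hpx).1
    have hpp : M.theParent (M.label c.1) ≠ M.theParent (M.label c.2) := by
      obtain ⟨hx, hy, -, px, py, hpx', hpy', -, -, hpp⟩ := h₂
      rw [← hM.eq_theParent_label hx hpx', ← hM.eq_theParent_label hy hpy']
      exact (hM.ne_of_mem_E hpp).symm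
    rw [reducePair_of_isRetCherry_s6 h₁ h₂,
      reducePair_of_isRetCherry_s6 h₁' ((h.isRetCherry_iff hM hM').1 h₂),
      h.theParent_label hM hM' h₂.1, h.theParent_label hM hM' h₂.2.1]
    have hdel := hM.delEdge (a := M.theParent (M.label c.2)) hpx
    have hdel' := hM'.delEdge (a := f (M.theParent (M.label c.2)))
      (h.map_mem_E hM hpx)
    exact ((h.delEdge hpyV hpxV).suppress hdel hdel' hpyV).suppress (hdel.suppress _)
      (hdel'.suppress _) (mem_suppress_V hpxV hpp)
  rw [reducePair_of_not_reduciblePair_s6 (not_or.2 ⟨h₁, h₂⟩),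
    reducePair_of_not_reduciblePair_s6 (not_or.2 ⟨h₁', (h.isRetCherry_iff hM hM').not.1 h₂⟩)]
  exact h

theorem reduceSeq (hM : M.WellFormed) (hM' : M'.WellFormed) (S : List (X × X)) :
    IsIsoMap f (M.reduceSeq S) (M'.reduceSeq S) := by
  induction S generalizing M M' with
  | nil => exact h
  | cons c S ih => exact ih (h.reducePair hM hM' c) (hM.reducePair c) (hM'.reducePair c)

theorem isSingleLeaf (hM : M.WellFormed) (hM' : M'.WellFormed) (hS : M.IsSingleLeaf) :
    M'.IsSingleLeaf := by
  obtain ⟨z, hz, hV, hE, -⟩ := hS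
  have hz' : z ∈ M'.taxa := h.taxa_eq ▸ hz
  refine ⟨z, hz', ?_, ?_, hM'.root_ne_label hz'⟩
  · rw [← Finset.coe_inj, ← h.bijOn.image_eq, hV]
    simp [Set.image_insert_eq, h.map_root, h.map_label z hz]
  · ext ⟨a', b'⟩
    rw [Finset.mem_singleton]
    constructor
    · intro hab
      obtain ⟨a, -, b, -, rfl, rfl, hab₀⟩ := h.exists_preimage_E hM' hab
      rw [hE, Finset.mem_singleton, Prod.mk.injEq] at hab₀
      rw [hab₀.1, hab₀.2, h.map_root, h.map_label z hz]
    · intro hab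
      rw [hab, ← h.map_root, ← h.map_label z hz]
      exact h.map_mem_E hM (hE ▸ Finset.mem_singleton_self _)

theorem reduces (hM : M.WellFormed) (hM' : M'.WellFormed) {S : List (X × X)}
    (hS : Reduces S M) : Reduces S M' :=
  (h.reduceSeq hM hM' S).isSingleLeaf (hM.reduceSeq S) (hM'.reduceSeq S) hS

end IsIsoMap

theorem Isomorphic.reduces_iff (hM : M.WellFormed) (hM' : M'.WellFormed)
    (h : M.Isomorphic M') {S : List (X × X)} : Reduces S M ↔ Reduces S M' := by
  obtain ⟨f, hf⟩ := isomorphic_iff_exists_isIsoMap.1 h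
  exact ⟨hf.reduces hM hM', (hf.symm hM).reduces hM' hM⟩

end Network

theorem SmallestCPS.of_isomorphic {X : Type} [LinearOrder X] {N N' : Network X}
    {S : List (X × X)} (hN : N.WellFormed) (hN' : N'.WellFormed) (h : N.Isomorphic N')
    (hS : SmallestCPS S N) : SmallestCPS S N' :=
  ⟨hS.1, (h.reduces_iff hN hN').1 hS.2.1,
    fun T hT hTN' => hS.2.2 T hT ((h.reduces_iff hN hN').2 hTN')⟩

/-- with a total order on the taxa, every CPN has a unique
smallest CPS, and within a reconstructible class two CPNs on the same taxa are
isomorphic iff they share the same smallest CPS. -/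
theorem unique_smallest_CPS_and_isomorphism (X : Type) [LinearOrder X]
    (N : Network X) (hN : N.IsCPN) :
    (∃! S : List (X × X), SmallestCPS S N) ∧
    ∀ C : Network X → Prop, Reconstructible C →
      ∀ N' : Network X, C N → C N' → N'.IsCPN → N.taxa = N'.taxa →
        (Isomorphic N N' ↔ ∃ S, SmallestCPS S N ∧ SmallestCPS S N') := by
  have hwf := Network.WellFormed.of_isPhylo hN.1
  obtain ⟨S, hS⟩ := exists_smallestCPS hwf (hN.2.imp fun _ => And.right)
  refine ⟨⟨S, hS, fun T hT => hT.unique hS⟩, fun C hC N' hCN hCN' hN' _ => ?_⟩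
  have hwf' := Network.WellFormed.of_isPhylo hN'.1
  constructor
  · exact fun hiso => ⟨S, hS, hS.of_isomorphic hwf hwf' hiso⟩
  · rintro ⟨T, hT, hT'⟩
    exact hC N N' hCN hCN' ⟨T, hT.isMinimalCPS hwf, hT'.isMinimalCPS hwf'⟩
end

section
/- Let N be a phylogenetic network and c an ordered pair of leaves. Then the reduced network Nc is a subnetwork of N (there is an embedding of Nc into N). -/
open scoped Classical

open Network

/-! Deleting vertices and edges restricts an embedding. Suppressing a vertex `p` with unique
in-edge `(u, p)` and out-edge `(p, w)` replaces these two edges by `(u, w)`, which is embedded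
as the concatenation of their two image paths; those paths are disjoint from the images of all
surviving edges, since the surviving edges avoid `p`. Starting from the identity embedding of
`N`, every step of the reduction therefore keeps the network embedded in `N`. -/

namespace Network

variable {X : Type}

lemma pathEdges_append_cons (l t : List ℕ) (m : ℕ) :
    pathEdges (l ++ m :: t) = pathEdges (l ++ [m]) ++ pathEdges (m :: t) := by
  induction l with
  | nil => rfl
  | cons a l ih =>
    cases l with
    | nil => rfl
    | cons b l => exact congrArg ((a, b) :: ·) ih

lemma isDipath_pair {N : Network X} {u v : ℕ} : N.IsDipath [u, v] ↔ (u, v) ∈ N.E :=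
  List.isChain_pair

lemma IsDipath.append_cons {N : Network X} {l t : List ℕ} {m : ℕ}
    (h₁ : N.IsDipath (l ++ [m])) (h₂ : N.IsDipath (m :: t)) : N.IsDipath (l ++ m :: t) := by
  have := List.IsChain.append_overlap h₁ h₂ (List.cons_ne_nil m [])
  rwa [List.append_assoc, List.singleton_append] at this

lemma exists_parents_eq_singleton {N : Network X} {v : ℕ} (h : N.indeg v = 1) :
    ∃ u, (u, v) ∈ N.E ∧ N.parents v = {u} := by
  obtain ⟨⟨u, v'⟩, ha⟩ := Finset.card_eq_one.mp h
  have hmem : (u, v') ∈ N.E.filter (fun e => e.2 = v) := ha ▸ Finset.mem_singleton_self _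
  obtain ⟨huv, rfl⟩ := Finset.mem_filter.mp hmem
  exact ⟨u, huv, by rw [parents, ha, Finset.image_singleton]⟩

lemma exists_children_eq_singleton {N : Network X} {v : ℕ} (h : N.outdeg v = 1) :
    ∃ w, (v, w) ∈ N.E ∧ N.children v = {w} := by
  obtain ⟨⟨v', w⟩, ha⟩ := Finset.card_eq_one.mp h
  have hmem : (v', w) ∈ N.E.filter (fun e => e.1 = v) := ha ▸ Finset.mem_singleton_self _
  obtain ⟨hvw, rfl⟩ := Finset.mem_filter.mp hmem
  exact ⟨w, hvw, by rw [children, ha, Finset.image_singleton]⟩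

lemma exists_suppress_eq {M : Network X} {p : ℕ} (hp : M.indeg p = 1 ∧ M.outdeg p = 1) :
    ∃ u w, (u, p) ∈ M.E ∧ (p, w) ∈ M.E ∧
      M.suppress p =
        { V := M.V.erase p
          E := M.E.filter (fun e => e.1 ≠ p ∧ e.2 ≠ p) ∪ {(u, w)}
          root := M.root, taxa := M.taxa, label := M.label } := by
  obtain ⟨u, hu, hpar⟩ := exists_parents_eq_singleton hp.1
  obtain ⟨w, hw, hchi⟩ := exists_children_eq_singleton hp.2
  refine ⟨u, w, hu, hw, ?_⟩
  rw [suppress, if_pos hp, hpar, hchi, Finset.singleton_product_singleton]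

theorem IsSubnetwork.refl (N : Network X) : IsSubnetwork N N := by
  refine ⟨id, fun e => [e.1, e.2], fun v hv => hv, Set.injOn_id _, fun _ _ => rfl,
    fun e he => ⟨isDipath_pair.mpr he, rfl, rfl⟩, ?_⟩
  intro e _ e' _ hne q hq hq'
  exact hne ((List.mem_singleton.mp hq).symm.trans (List.mem_singleton.mp hq'))

theorem IsSubnetwork.of_subgraph {M' M N : Network X} (h : IsSubnetwork M N)
    (hV : M'.V ⊆ M.V) (hE : M'.E ⊆ M.E) (htaxa : M'.taxa ⊆ M.taxa)
    (hlabel : M'.label = M.label) :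
    IsSubnetwork M' N := by
  obtain ⟨f, g, hmap, hinj, hleaf, hpath, hdisj⟩ := h
  exact ⟨f, g, fun v hv => hmap v (hV hv), hinj.mono (Finset.coe_subset.mpr hV),
    fun x hx => hlabel ▸ hleaf x (htaxa hx), fun e he => hpath e (hE he),
    fun e he e' he' => hdisj e (hE he) e' (hE he')⟩

lemma IsEmbedding.pathEdges_disjoint_of_avoids {M N : Network X} {f : ℕ → ℕ}
    {g : ℕ × ℕ → List ℕ} (h : IsEmbedding M N f g) {e : ℕ × ℕ} (he : e ∈ M.E)
    {u p w : ℕ} (hep : e.1 ≠ p ∧ e.2 ≠ p) (hu : (u, p) ∈ M.E) (hw : (p, w) ∈ M.E) :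
    ∀ q ∈ pathEdges (g e), q ∉ pathEdges (g (u, p)) ++ pathEdges (g (p, w)) := by
  intro q hq hq'
  rcases List.mem_append.mp hq' with hq' | hq'
  · exact h.2.2.2.2 e he _ hu (fun heq => hep.2 (congrArg Prod.snd heq)) q hq hq'
  · exact h.2.2.2.2 e he _ hw (fun heq => hep.1 (congrArg Prod.fst heq)) q hq hq'

theorem IsEmbedding.isSubnetwork_splice {M N : Network X} {f : ℕ → ℕ}
    {g : ℕ × ℕ → List ℕ} (hemb : IsEmbedding M N f g) {u p w : ℕ} (hu : (u, p) ∈ M.E)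
    (hw : (p, w) ∈ M.E) :
    IsSubnetwork
      { V := M.V.erase p
        E := M.E.filter (fun e => e.1 ≠ p ∧ e.2 ≠ p) ∪ {(u, w)}
        root := M.root, taxa := M.taxa, label := M.label } N := by
  have ⟨hmap, hinj, hleaf, hpath, hdisj⟩ := hemb
  obtain ⟨l, hl⟩ : ∃ l, g (u, p) = l ++ [f p] := List.getLast?_eq_some_iff.mp (hpath _ hu).2.2
  obtain ⟨t, ht⟩ : ∃ t, g (p, w) = f p :: t := List.head?_eq_some_iff.mp (hpath _ hw).2.1
  set E₀ := M.E.filter (fun e => e.1 ≠ p ∧ e.2 ≠ p)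
  -- The new edge `(u, w)` may already be an edge of `M`; then it keeps its old image.
  let g' : ℕ × ℕ → List ℕ := fun e => if e ∈ E₀ then g e else l ++ f p :: t
  have hcases : ∀ e ∈ E₀ ∪ {(u, w)},
      (e ∈ E₀ ∧ g' e = g e) ∨ (e = (u, w) ∧ g' e = l ++ f p :: t) := by
    intro e he
    by_cases he₀ : e ∈ E₀
    · exact Or.inl ⟨he₀, if_pos he₀⟩
    · have hnew := (Finset.mem_union.mp he).resolve_left he₀
      exact Or.inr ⟨Finset.mem_singleton.mp hnew, if_neg he₀⟩
  have hsurv : ∀ e ∈ E₀, ∀ e' ∈ E₀ ∪ {(u, w)}, e ≠ e' →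
      ∀ q ∈ pathEdges (g' e), q ∉ pathEdges (g' e') := by
    intro e he e' he' hne
    obtain ⟨heM, hep⟩ := Finset.mem_filter.mp he
    rw [show g' e = g e from if_pos he]
    rcases hcases e' he' with ⟨he'₀, hg'⟩ | ⟨-, hg'⟩
    · rw [hg']
      exact hdisj e heM e' (Finset.mem_filter.mp he'₀).1 hne
    · rw [hg', pathEdges_append_cons, ← hl, ← ht]
      exact hemb.pathEdges_disjoint_of_avoids heM hep hu hw
  refine ⟨f, g', fun v hv => hmap v (Finset.mem_of_mem_erase hv),
    hinj.mono (Finset.coe_subset.mpr (Finset.erase_subset _ _)), hleaf, ?_, ?_⟩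
  · intro e he
    rcases hcases e he with ⟨he₀, hg'⟩ | ⟨rfl, hg'⟩
    · rw [hg']
      exact hpath e (Finset.mem_filter.mp he₀).1
    · obtain ⟨hup, hu₁, -⟩ := hl ▸ hpath _ hu
      obtain ⟨hpw, -, hw₂⟩ := ht ▸ hpath _ hw
      rw [hg', List.getLast?_append_of_ne_nil _ (List.cons_ne_nil _ _)]
      exact ⟨hup.append_cons hpw, by cases l <;> exact hu₁, hw₂⟩
  · intro e he e' he' hne
    rcases hcases e he with ⟨he₀, -⟩ | ⟨rfl, -⟩
    · exact hsurv e he₀ e' he' hne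
    · rcases hcases e' he' with ⟨he'₀, -⟩ | ⟨rfl, -⟩
      · exact fun q hq hq' => hsurv e' he'₀ _ he (Ne.symm hne) q hq' hq
      · exact absurd rfl hne

theorem IsSubnetwork.suppress {M N : Network X} (h : IsSubnetwork M N) (p : ℕ) :
    IsSubnetwork (M.suppress p) N := by
  by_cases hp : M.indeg p = 1 ∧ M.outdeg p = 1
  · obtain ⟨u, w, hu, hw, hsupp⟩ := exists_suppress_eq hp
    obtain ⟨f, g, hemb⟩ := h
    rw [hsupp]
    exact hemb.isSubnetwork_splice hu hw
  · rwa [Network.suppress, if_neg hp]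

end Network

theorem reduced_network_is_subnetwork_general (X : Type) (N : Network X) (c : X × X) :
    IsSubnetwork (N.reducePair c) N := by
  unfold reducePair
  split_ifs
  · refine .suppress ?_ _
    exact (IsSubnetwork.refl N).of_subgraph (Finset.erase_subset _ _) (Finset.filter_subset _ _)
      (Finset.erase_subset _ _) rfl
  · refine .suppress (.suppress ?_ _) _
    exact (IsSubnetwork.refl N).of_subgraph subset_rfl (Finset.erase_subset _ _) subset_rfl rfl
  · exact IsSubnetwork.refl N

/-- reducing any ordered pair of leaves gives a subnetwork. -/
theorem reduced_network_is_subnetwork (X : Type) (N : Network X)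
    (hN : N.IsPhylo) (c : X × X) (h1 : c.1 ∈ N.taxa) (h2 : c.2 ∈ N.taxa) :
    IsSubnetwork (N.reducePair c) N :=
  reduced_network_is_subnetwork_general X N c
end
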